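/- arXiv:0905.3465 — 9 statements merged into one kernel-verified Lean document; each statement's English description precedes it below -/
import Mathlib

section
/- Let u ≥ 1 and let ν = (ν₁,...,νₙ) and ν' = (ν'₁,...,ν'ₙ) be sequences of nonzero integers of the same length with Σᵢ|νᵢ| = Σᵢ|ν'ᵢ| = 2u, Σᵢνᵢ = Σᵢν'ᵢ = 0, and νᵢ ≡ ν'ᵢ (mod 2u) for all i. If ν ≠ ν', then n = 2 and {ν, ν'} = {(u,-u), (-u,u)}. -/
/-!
Put `δᵢ = νᵢ - ν'ᵢ`. Every `δᵢ` is a multiple of `2u`, `∑ δᵢ = 0` and `δ ≠ 0`, so the positive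
parts of `δ` sum to a positive multiple of `2u` and `∑ |δᵢ| ≥ 4u = ∑ (|νᵢ| + |ν'ᵢ|)`. Hence the
triangle inequality `|δᵢ| ≤ |νᵢ| + |ν'ᵢ|` is an equality at every index; since `νᵢ ≠ 0` this rules
out `δᵢ = 0`, so every index carries at least `2u` of the total `4u` and `n ≤ 2`. For `n ≤ 2` the
conditions pin the sequences down directly.
-/

open Finset

section
variable {ι : Type*} [Fintype ι] {m : ℤ}

lemma two_mul_le_sum_abs_of_sum_eq_zero {δ : ι → ℤ} (hdvd : ∀ i, m ∣ δ i) (hsum : ∑ i, δ i = 0)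
    (hne : δ ≠ 0) : 2 * m ≤ ∑ i, |δ i| := by
  have hpos : ∃ i, 0 < δ i := by
    by_contra! h
    exact hne (funext fun i => (sum_eq_zero_iff_of_nonpos fun i _ => h i).1 hsum i (mem_univ i))
  have hdvd_pos : m ∣ ∑ i, max (δ i) 0 := dvd_sum fun i _ => by
    rcases max_choice (δ i) 0 with h | h <;> simp [h, hdvd i]
  have hpos_sum : 0 < ∑ i, max (δ i) 0 :=
    sum_pos' (fun i _ => le_max_right _ _) (hpos.imp fun i h => ⟨mem_univ i, lt_max_of_lt_left h⟩)
  have habs : ∀ i, |δ i| = 2 * max (δ i) 0 - δ i := fun i => by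
    rcases le_total 0 (δ i) with h | h <;> simp [abs_of_nonneg, abs_of_nonpos, h]; ring
  calc 2 * m ≤ 2 * ∑ i, max (δ i) 0 := by gcongr; exact Int.le_of_dvd hpos_sum hdvd_pos
    _ = ∑ i, |δ i| := by simp_rw [habs, sum_sub_distrib, ← mul_sum, hsum, sub_zero]

lemma card_le_two_of_sum_abs_le {x y : ι → ℤ} (hm : 0 < m) (hx : ∀ i, x i ≠ 0)
    (habs : ∑ i, (|x i| + |y i|) ≤ 2 * m) (hsum : ∑ i, x i = ∑ i, y i)
    (hdvd : ∀ i, m ∣ x i - y i) (hne : x ≠ y) : Fintype.card ι ≤ 2 := by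
  have htri : ∀ i ∈ univ, |x i - y i| ≤ |x i| + |y i| := fun i _ => abs_sub _ _
  have hlower : 2 * m ≤ ∑ i, |x i - y i| :=
    two_mul_le_sum_abs_of_sum_eq_zero hdvd (by simp [sum_sub_distrib, hsum]) (sub_ne_zero.2 hne)
  have heq : ∀ i, |x i - y i| = |x i| + |y i| := fun i =>
    (sum_eq_sum_iff_of_le htri).1 (le_antisymm (sum_le_sum htri) (habs.trans hlower)) i (mem_univ i)
  have hm_le : ∀ i ∈ univ, m ≤ |x i| + |y i| := fun i _ => by
    have hxy : x i - y i ≠ 0 := fun h => by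
      have h' := heq i
      rw [h, abs_zero] at h'
      linarith [abs_pos.2 (hx i), abs_nonneg (y i)]
    exact heq i ▸ Int.le_of_dvd (abs_pos.2 hxy) ((dvd_abs _ _).2 (hdvd i))
  have hcard : (Fintype.card ι : ℤ) * m ≤ 2 * m := by
    simpa using (card_nsmul_le_sum univ _ m hm_le).trans habs
  exact_mod_cast le_of_mul_le_mul_right hcard hm

end

lemma List.length_le_two_of_forall₂_dvd {ν ν' : List ℤ} {m : ℤ} (hm : 0 < m)
    (hne : ∀ x ∈ ν, x ≠ 0) (habs : (ν.map (|·|)).sum + (ν'.map (|·|)).sum ≤ 2 * m)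
    (hsum : ν.sum = ν'.sum) (hcong : List.Forall₂ (fun a b => m ∣ a - b) ν ν') (hneq : ν ≠ ν') :
    ν.length ≤ 2 := by
  obtain ⟨n, x, y, rfl, rfl⟩ : ∃ n, ∃ x y : Fin n → ℤ, ν = List.ofFn x ∧ ν' = List.ofFn y :=
    ⟨ν.length, (ν[·]), fun i => ν'[i.1]'(hcong.length_eq ▸ i.2), List.ofFn_getElem.symm,
      List.ext_getElem (by simp [hcong.length_eq]) (by simp)⟩
  simp only [List.mem_ofFn', Set.forall_mem_range, List.map_ofFn, List.sum_ofFn,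
    Function.comp_apply] at hne habs hsum
  have hdvd : ∀ i, m ∣ x i - y i := fun i => by simpa using hcong.get (i := i) (by simp) (by simp)
  simpa using card_le_two_of_sum_abs_le hm hne (by rwa [sum_add_distrib]) hsum hdvd
    (mt (congrArg List.ofFn) hneq)

theorem congruent_zero_sum_sequences_general (u : ℕ) (hu : 1 ≤ u) (ν ν' : List ℤ)
    (hne : ∀ x ∈ ν, x ≠ 0)
    (habs : (ν.map (fun x => |x|)).sum = 2 * (u : ℤ))
    (habs' : (ν'.map (fun x => |x|)).sum = 2 * (u : ℤ))
    (hsum : ν.sum = 0) (hsum' : ν'.sum = 0)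
    (hcong : List.Forall₂ (fun a b => (2 * (u : ℤ)) ∣ (a - b)) ν ν')
    (hneq : ν ≠ ν') :
    (ν = [(u : ℤ), -(u : ℤ)] ∧ ν' = [-(u : ℤ), (u : ℤ)]) ∨
      (ν = [-(u : ℤ), (u : ℤ)] ∧ ν' = [(u : ℤ), -(u : ℤ)]) := by
  have hlen : ν.length ≤ 2 :=
    List.length_le_two_of_forall₂_dvd (by omega) hne (by rw [habs, habs']; omega)
      (hsum.trans hsum'.symm) hcong hneq
  rcases hcong with _ | ⟨-, _ | ⟨-, _ | ⟨-, -⟩⟩⟩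
  · exact absurd rfl hneq
  · exact (hne _ (List.mem_singleton_self _) (by simpa using hsum)).elim
  · rename_i a c b d
    simp only [List.sum_cons, List.sum_nil, add_zero, List.map_cons, List.map_nil, ne_eq,
      List.cons.injEq, not_and, and_true] at hsum hsum' habs habs' hneq ⊢
    obtain rfl : b = -a := by omega
    obtain rfl : d = -c := by omega
    rw [abs_neg] at habs habs'
    have ha : a = u ∨ a = -u := (abs_eq (by positivity)).1 (by omega)
    have hc : c = u ∨ c = -u := (abs_eq (by positivity)).1 (by omega)
    omega
  · simp at hlen

/-- Two distinct sequences of nonzero integers, congruent entrywise mod 2u,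
each with absolute values summing to 2u and entries summing to 0, must be
(u,-u) and (-u,u) in some order. -/
theorem congruent_zero_sum_sequences (u : ℕ) (hu : 1 ≤ u) (ν ν' : List ℤ)
    (hne : ∀ x ∈ ν, x ≠ 0) (hne' : ∀ x ∈ ν', x ≠ 0)
    (habs : (ν.map (fun x => |x|)).sum = 2 * (u : ℤ))
    (habs' : (ν'.map (fun x => |x|)).sum = 2 * (u : ℤ))
    (hsum : ν.sum = 0) (hsum' : ν'.sum = 0)
    (hcong : List.Forall₂ (fun a b => (2 * (u : ℤ)) ∣ (a - b)) ν ν')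
    (hneq : ν ≠ ν') :
    (ν = [(u : ℤ), -(u : ℤ)] ∧ ν' = [-(u : ℤ), (u : ℤ)]) ∨
      (ν = [-(u : ℤ), (u : ℤ)] ∧ ν' = [(u : ℤ), -(u : ℤ)]) :=
  congruent_zero_sum_sequences_general u hu ν ν' hne habs habs' hsum hsum' hcong hneq
end

section
/- Let κ ≥ 1 and let ν = (ν₁,...,νₙ) be a sequence of nonzero integers with Σᵢ|νᵢ| = κ, Σᵢνᵢ = κ, and n ≥ 2. If ν' = (ν'₁,...,ν'ₙ) is a sequence of nonzero integers with Σᵢ|ν'ᵢ| = κ, Σᵢν'ᵢ = -κ, n ≥ 2, and νᵢ ≡ ν'ᵢ (mod κ) for all i, then n = 2 and ν' = (ν₁-κ, ν₂-κ). -/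
/-!
Since `Σ|νᵢ| = Σνᵢ`, every `νᵢ` is positive, and since `Σ|ν'ᵢ| = -Σν'ᵢ`, every `ν'ᵢ` is
nonpositive. Hence each difference `νᵢ - ν'ᵢ` is a positive multiple of `κ`, so at least `κ`.
Summing, `nκ ≤ Σνᵢ - Σν'ᵢ = 2κ`, which forces `n = 2` and both differences to equal `κ`.
-/

namespace List

variable {α β : Type*}

theorem Forall₂.imp_of_mem {R S : α → β → Prop} {l₁ : List α} {l₂ : List β}
    (H : ∀ a ∈ l₁, ∀ b ∈ l₂, R a b → S a b) (h : Forall₂ R l₁ l₂) : Forall₂ S l₁ l₂ := by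
  induction h with
  | nil => exact .nil
  | cons hab _ ih =>
    exact .cons (H _ mem_cons_self _ mem_cons_self hab)
      (ih fun a ha b hb => H a (mem_cons_of_mem _ ha) b (mem_cons_of_mem _ hb))

theorem Forall₂.sum_add_length_nsmul_le [AddCommMonoid α] [PartialOrder α] [IsOrderedAddMonoid α]
    {c : α} {l₁ l₂ : List α} (h : Forall₂ (fun a b => a + c ≤ b) l₁ l₂) :
    l₁.sum + l₁.length • c ≤ l₂.sum := by
  induction h with
  | nil => simp
  | cons hab _ ih =>
    rw [sum_cons, sum_cons, length_cons, succ_nsmul', add_add_add_comm]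
    exact add_le_add hab ih

section Abs

variable [AddCommGroup α] [LinearOrder α] [IsOrderedAddMonoid α] {l : List α}

theorem nonneg_of_sum_map_abs_eq_sum (h : (l.map (|·|)).sum = l.sum) : ∀ x ∈ l, 0 ≤ x := by
  intro x hx
  by_contra! hneg
  have hlt := sum_lt_sum id (|·|) (fun y _ => le_abs_self y) ⟨x, hx, hneg.trans_le (abs_nonneg x)⟩
  rw [map_id] at hlt
  exact hlt.ne' h

theorem nonpos_of_sum_map_abs_eq_neg_sum (h : (l.map (|·|)).sum = -l.sum) : ∀ x ∈ l, x ≤ 0 := by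
  have hneg := nonneg_of_sum_map_abs_eq_sum (l := l.map (-·))
    (by simpa [Function.comp_def, sum_neg] using h)
  intro x hx
  simpa using hneg (-x) (mem_map_of_mem hx)

end Abs

end List

open List in
theorem congruent_plus_minus_sequences_general (κ : ℕ) (hκ : 1 ≤ κ) (ν ν' : List ℤ)
    (hne : ∀ x ∈ ν, x ≠ 0)
    (habs : (ν.map (fun x => |x|)).sum = (κ : ℤ))
    (habs' : (ν'.map (fun x => |x|)).sum = (κ : ℤ))
    (hsum : ν.sum = (κ : ℤ)) (hsum' : ν'.sum = -(κ : ℤ))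
    (hlen : 2 ≤ ν.length)
    (hcong : List.Forall₂ (fun a b => (κ : ℤ) ∣ (a - b)) ν ν') :
    ∃ a b : ℤ, ν = [a, b] ∧ ν' = [a - (κ : ℤ), b - (κ : ℤ)] := by
  have hpos : ∀ x ∈ ν, 0 < x := fun x hx =>
    (nonneg_of_sum_map_abs_eq_sum (habs.trans hsum.symm) x hx).lt_of_ne' (hne x hx)
  have hnonpos : ∀ x ∈ ν', x ≤ 0 :=
    nonpos_of_sum_map_abs_eq_neg_sum (by rw [habs', hsum', neg_neg])
  have hgap : Forall₂ (fun b a : ℤ => b + κ ≤ a) ν' ν := Forall₂.flip <|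
    hcong.imp_of_mem fun a ha b hb hdvd => by
      have hκ_le := Int.le_of_dvd (by linarith [hpos a ha, hnonpos b hb]) hdvd
      show b + κ ≤ a
      linarith
  have hbound := hgap.sum_add_length_nsmul_le
  rw [hsum, hsum', ← hcong.length_eq, nsmul_eq_mul] at hbound
  have hlen2 : ν.length = 2 := by
    have : (ν.length : ℤ) ≤ 2 :=
      le_of_mul_le_mul_right (by linarith) (by exact_mod_cast hκ : (0 : ℤ) < κ)
    omega
  obtain ⟨a, b, rfl⟩ := length_eq_two.mp hlen2
  obtain ⟨a', b', rfl⟩ := length_eq_two.mp (hcong.length_eq ▸ hlen2)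
  simp only [forall₂_cons, Forall₂.nil, and_true] at hgap
  simp only [sum_cons, sum_nil, add_zero] at hsum hsum'
  refine ⟨a, b, rfl, ?_⟩
  rw [show a' = a - κ by linarith, show b' = b - κ by linarith]

/-- If ν is a list of nonzero integers with Σ|νᵢ| = κ, Σνᵢ = κ and length ≥ 2,
and ν' is a list of nonzero integers with Σ|ν'ᵢ| = κ, Σν'ᵢ = -κ, length ≥ 2,
congruent entrywise to ν modulo κ, then the length is 2 and ν' = (ν₁-κ, ν₂-κ). -/
theorem congruent_plus_minus_sequences (κ : ℕ) (hκ : 1 ≤ κ) (ν ν' : List ℤ)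
    (hne : ∀ x ∈ ν, x ≠ 0) (hne' : ∀ x ∈ ν', x ≠ 0)
    (habs : (ν.map (fun x => |x|)).sum = (κ : ℤ))
    (habs' : (ν'.map (fun x => |x|)).sum = (κ : ℤ))
    (hsum : ν.sum = (κ : ℤ)) (hsum' : ν'.sum = -(κ : ℤ))
    (hlen : 2 ≤ ν.length) (hlen' : 2 ≤ ν'.length)
    (hcong : List.Forall₂ (fun a b => (κ : ℤ) ∣ (a - b)) ν ν') :
    ∃ a b : ℤ, ν = [a, b] ∧ ν' = [a - (κ : ℤ), b - (κ : ℤ)] :=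
  congruent_plus_minus_sequences_general κ hκ ν ν' hne habs habs' hsum hsum' hlen hcong
end

section
/- Let u ≥ 1. Suppose ν = (ν₁,...,νₙ) is a sequence of nonzero integers with Σᵢ|νᵢ| = 2u and Σᵢνᵢ = 2u, and ν' = (ν'₁,...,ν'ₙ) is a sequence of nonzero integers with Σᵢ|ν'ᵢ| = 2u and Σᵢν'ᵢ = 0, with νᵢ ≡ ν'ᵢ (mod 2u) for all i. Then there exists a unique index i₀ such that ν_{i₀} = u, ν'_{i₀} = -u, and νᵢ = ν'ᵢ for all i ≠ i₀. -/
lemma abs_list_sum_le (l : List ℤ) : |l.sum| ≤ (l.map (fun x => |x|)).sum := by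
  induction l with
  | nil => simp
  | cons a t ih =>
    simp only [List.sum_cons, List.map_cons]
    exact (abs_add_le _ _).trans (by linarith)

lemma abs_list_nonneg (l : List ℤ) : 0 ≤ (l.map (fun x => |x|)).sum :=
  List.sum_nonneg (fun x hx => by
    obtain ⟨y, _, rfl⟩ := List.mem_map.mp hx; exact abs_nonneg y)

-- all elements divisible by m, sum 0, abssum < 2m ⇒ all zero
lemma lemA (m : ℤ) (hm : 0 < m) : ∀ (l : List ℤ), (∀ x ∈ l, m ∣ x) → l.sum = 0 →
    (l.map (fun x => |x|)).sum < 2 * m → ∀ x ∈ l, x = 0 := by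
  intro l
  induction l with
  | nil => simp
  | cons a t ih =>
    intro hdvd hsum habs x hx
    have hat : |a| + (t.map (fun x => |x|)).sum < 2 * m := by simpa using habs
    have htn := abs_list_nonneg t
    by_cases ha : a = 0
    · subst ha
      rcases List.mem_cons.mp hx with h | h
      · exact h
      · exact ih (fun y hy => hdvd y (List.mem_cons_of_mem _ hy)) (by simpa using hsum)
          (lt_of_le_of_lt (by simp) habs) x h
    · exfalso
      have h1 : m ≤ |a| := Int.le_of_dvd (abs_pos.mpr ha) ((dvd_abs _ _).mpr (hdvd a (by simp)))
      have hts : t.sum = -a := by have := hsum; simp at this; linarith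
      have h2 : |a| ≤ (t.map (fun x => |x|)).sum := by
        calc |a| = |t.sum| := by rw [hts, abs_neg]
        _ ≤ _ := abs_list_sum_le _
      linarith

lemma lemB (m : ℤ) (hm : 0 < m) : ∀ (l : List ℤ), (∀ x ∈ l, m ∣ x) → l.sum = m →
    (l.map (fun x => |x|)).sum ≤ 2 * m →
    ∃ i, i < l.length ∧ l.getD i 0 = m ∧ ∀ j < l.length, j ≠ i → l.getD j 0 = 0 := by
  intro l
  induction l with
  | nil => intro _ h _; simp at h; omega
  | cons a t ih =>
    intro hdvd hsum habs
    have hat : |a| + (t.map (fun x => |x|)).sum ≤ 2 * m := by simpa using habs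
    have htn := abs_list_nonneg t
    by_cases ha : a = 0
    · subst ha
      obtain ⟨i, hi, hival, hrest⟩ := ih (fun y hy => hdvd y (List.mem_cons_of_mem _ hy))
        (by simpa using hsum) (by simp at hat ⊢; linarith)
      refine ⟨i + 1, by simpa using hi, by simpa using hival, ?_⟩
      intro j hj hji
      cases j with
      | zero => simp
      | succ j' => exact hrest j' (by simpa using hj) (by omega)
    · -- a ≠ 0: show a = m and t all zero
      have h1 : m ≤ |a| := Int.le_of_dvd (abs_pos.mpr ha) ((dvd_abs _ _).mpr (hdvd a (by simp)))
      have hts : t.sum = m - a := by have := hsum; simp at this; linarith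
      have h2 : |m - a| ≤ (t.map (fun x => |x|)).sum := by
        rw [← hts]; exact abs_list_sum_le _
      obtain ⟨k, hk⟩ := hdvd a (by simp)
      have ham : a = m := by
        rcases lt_trichotomy k 1 with h | h | h
        · have hk0 : k ≤ 0 := by omega
          have hale : a ≤ 0 := by nlinarith
          have haneg : a < 0 := lt_of_le_of_ne hale ha
          have e1 : |a| = -a := abs_of_neg haneg
          have e2 : |m - a| = m - a := abs_of_pos (by linarith)
          linarith
        · simp [h] at hk; omega
        · have hk2 : 2 ≤ k := by omega
          have ham2 : 2 * m ≤ a := by nlinarith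
          have e1 : |a| = a := abs_of_nonneg (by linarith)
          have e2 : |m - a| = a - m := by rw [abs_sub_comm]; exact abs_of_nonneg (by linarith)
          linarith
      have hall : ∀ x ∈ t, x = 0 := by
        refine lemA m hm t (fun y hy => hdvd y (List.mem_cons_of_mem _ hy)) (by rw [ham] at hts; omega) ?_
        have : |a| = m := by rw [ham]; exact abs_of_pos hm
        linarith
      refine ⟨0, by simp, by simpa using ham, ?_⟩
      intro j hj hj0
      cases j with
      | zero => omega
      | succ j' =>
        simp only [List.getD_cons_succ]
        rcases Nat.lt_or_ge j' t.length with h | h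
        · exact hall _ (List.getD_eq_getElem t 0 h ▸ List.getElem_mem h)
        · exact List.getD_eq_default _ _ h

-- sum of list via getD over range
lemma sum_eq_range (l : List ℤ) : l.sum = ∑ i ∈ Finset.range l.length, l.getD i 0 := by
  induction l with
  | nil => simp
  | cons a t ih =>
    rw [List.sum_cons, ih, List.length_cons, Finset.sum_range_succ']
    simp [List.getD]
    ring

/-- If ν is a list of nonzero integers with Σ|νᵢ| = 2u and Σνᵢ = 2u, and ν' is a
list of nonzero integers with Σ|ν'ᵢ| = 2u and Σν'ᵢ = 0, congruent entrywise to ν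
modulo 2u, then there is a unique index i₀ with ν_{i₀} = u, ν'_{i₀} = -u and
νᵢ = ν'ᵢ for all other indices. -/
theorem congruent_plus_zero_sequences (u : ℕ) (hu : 1 ≤ u) (ν ν' : List ℤ)
    (hne : ∀ x ∈ ν, x ≠ 0) (hne' : ∀ x ∈ ν', x ≠ 0)
    (habs : (ν.map (fun x => |x|)).sum = 2 * (u : ℤ))
    (habs' : (ν'.map (fun x => |x|)).sum = 2 * (u : ℤ))
    (hsum : ν.sum = 2 * (u : ℤ)) (hsum' : ν'.sum = 0)
    (hcong : List.Forall₂ (fun a b => (2 * (u : ℤ)) ∣ (a - b)) ν ν') :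
    ∃! i₀ : ℕ, i₀ < ν.length ∧ ν.getD i₀ 0 = (u : ℤ) ∧ ν'.getD i₀ 0 = -(u : ℤ) ∧
      ∀ i < ν.length, i ≠ i₀ → ν.getD i 0 = ν'.getD i 0 := by
  have hm : (0 : ℤ) < 2 * u := by positivity
  have hlen : ν.length = ν'.length := hcong.length_eq
  set d := List.zipWith (· - ·) ν ν' with hd
  have hdlen : d.length = ν.length := by simp [hd, hlen]
  have hdget : ∀ i, i < ν.length → d.getD i 0 = ν.getD i 0 - ν'.getD i 0 := by
    intro i h
    rw [List.getD_eq_getElem d 0 (by omega), List.getElem_zipWith,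
      List.getD_eq_getElem ν 0 h, List.getD_eq_getElem ν' 0 (hlen ▸ h)]
  have hddvd : ∀ x ∈ d, (2 * (u:ℤ)) ∣ x := by
    intro x hx
    rw [List.mem_iff_getElem] at hx
    obtain ⟨i, hi, rfl⟩ := hx
    rw [List.getElem_zipWith]
    exact hcong.get _ _
  -- sum of d
  have hdsum : d.sum = 2 * (u:ℤ) := by
    rw [sum_eq_range, hdlen]
    have h1 : ν.sum = ∑ i ∈ Finset.range ν.length, ν.getD i 0 := sum_eq_range ν
    have h2 : ν'.sum = ∑ i ∈ Finset.range ν.length, ν'.getD i 0 := by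
      rw [sum_eq_range, hlen]
    rw [Finset.sum_congr rfl (fun i hi => hdget i (Finset.mem_range.mp hi)),
      Finset.sum_sub_distrib, ← h1, ← h2, hsum, hsum']
    ring
  -- abs sum of d
  have hdabs : (d.map (fun x => |x|)).sum ≤ 2 * (2 * (u:ℤ)) := by
    rw [sum_eq_range]
    have e1 : (d.map (fun x => |x|)).length = ν.length := by simp [hdlen]
    rw [e1]
    have : ∀ i ∈ Finset.range ν.length,
        (d.map fun x => |x|).getD i 0 ≤ (ν.map fun x => |x|).getD i 0 + (ν'.map fun x => |x|).getD i 0 := by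
      intro i hi
      have hi' := Finset.mem_range.mp hi
      rw [List.getD_eq_getElem _ 0 (by simpa [hdlen] using hi'),
        List.getD_eq_getElem _ 0 (by simpa using hi'),
        List.getD_eq_getElem _ 0 (by simp [← hlen]; omega)]
      simp only [List.getElem_map, hd, List.getElem_zipWith]
      simpa using abs_sub_le (ν[i]) 0 (ν'[i])
    calc ∑ i ∈ Finset.range ν.length, (d.map fun x => |x|).getD i 0
        ≤ ∑ i ∈ Finset.range ν.length, ((ν.map fun x => |x|).getD i 0 + (ν'.map fun x => |x|).getD i 0) :=
          Finset.sum_le_sum this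
      _ = 2 * (2 * (u:ℤ)) := by
          rw [Finset.sum_add_distrib]
          have e2 : (ν.map fun x => |x|).sum = ∑ i ∈ Finset.range ν.length, (ν.map fun x => |x|).getD i 0 := by
            rw [sum_eq_range]; simp
          have e3 : (ν'.map fun x => |x|).sum = ∑ i ∈ Finset.range ν.length, (ν'.map fun x => |x|).getD i 0 := by
            rw [sum_eq_range]; simp [← hlen]
          rw [← e2, ← e3, habs, habs']; ring
  obtain ⟨i₀, hi₀len, hi₀val, hi₀rest⟩ := lemB _ hm d hddvd hdsum hdabs
  rw [hdlen] at hi₀len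
  -- other entries equal
  have heq : ∀ i, i < ν.length → i ≠ i₀ → ν.getD i 0 = ν'.getD i 0 := by
    intro i hi hne
    have := hi₀rest i (by omega) hne
    rw [hdget i hi] at this
    linarith
  have hdiff : ν.getD i₀ 0 - ν'.getD i₀ 0 = 2 * (u:ℤ) := by
    rw [← hdget i₀ hi₀len]; exact hi₀val
  -- |ν i₀| = |ν' i₀|
  have habseq : |ν.getD i₀ 0| = |ν'.getD i₀ 0| := by
    have e2 : (ν.map fun x => |x|).sum = ∑ i ∈ Finset.range ν.length, |ν.getD i 0| := by
      rw [sum_eq_range]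
      simp only [List.length_map]
      refine Finset.sum_congr rfl (fun i hi => ?_)
      have hi' := Finset.mem_range.mp hi
      rw [List.getD_eq_getElem _ 0 (by simpa using hi'), List.getElem_map,
        List.getD_eq_getElem _ 0 hi']
    have e3 : (ν'.map fun x => |x|).sum = ∑ i ∈ Finset.range ν.length, |ν'.getD i 0| := by
      rw [sum_eq_range]
      simp only [List.length_map, ← hlen]
      refine Finset.sum_congr rfl (fun i hi => ?_)
      have hi' := Finset.mem_range.mp hi
      rw [List.getD_eq_getElem _ 0 (by simp [← hlen]; omega), List.getElem_map,
        List.getD_eq_getElem ν' 0 (show i < ν'.length from hlen ▸ hi')]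
    have key : ∑ i ∈ Finset.range ν.length, |ν.getD i 0| = ∑ i ∈ Finset.range ν.length, |ν'.getD i 0| := by
      rw [← e2, ← e3, habs, habs']
    have hsplit := Finset.add_sum_erase (Finset.range ν.length) (fun i => |ν.getD i 0|)
      (Finset.mem_range.mpr hi₀len)
    have hsplit' := Finset.add_sum_erase (Finset.range ν.length) (fun i => |ν'.getD i 0|)
      (Finset.mem_range.mpr hi₀len)
    have hrest : ∑ i ∈ (Finset.range ν.length).erase i₀, |ν.getD i 0| =
        ∑ i ∈ (Finset.range ν.length).erase i₀, |ν'.getD i 0| := by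
      refine Finset.sum_congr rfl (fun i hi => ?_)
      obtain ⟨hne, hmem⟩ := Finset.mem_erase.mp hi
      rw [heq i (Finset.mem_range.mp hmem) hne]
    rw [← hsplit, ← hsplit', hrest] at key
    linarith
  -- conclude values
  have hval : ν.getD i₀ 0 = (u:ℤ) ∧ ν'.getD i₀ 0 = -(u:ℤ) := by
    rcases abs_eq_abs.mp habseq with h | h
    · exfalso; rw [h] at hdiff; simp at hdiff; omega
    · constructor <;> [skip; skip] <;> omega
  refine ⟨i₀, ⟨hi₀len, hval.1, hval.2, heq⟩, ?_⟩
  rintro y ⟨hylen, hyval, hyval', -⟩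
  by_contra hne
  have := heq y hylen hne
  rw [hyval, hyval'] at this
  omega
end

section
/- For u ≥ 1, the number of compositions of 2u in which no part equals u is 2^(2u-1) - 2^(u-2)·(u+3) + 1. -/
/-!
Cut a composition of `2u` containing the part `u` at the first occurrence of `u`:
`l = s ++ u :: t`, where `s` is a composition of some `a ≤ u` avoiding `u` and `t` is any
composition of `u - a`. For `a < u` every composition of `a` avoids `u`, and `[u]` is the only
composition of `u` that does not. As there are `2 ^ (m - 1)` compositions of `m` (truncated
subtraction gives the right value `1` at `m = 0`), the compositions containing `u` number
`∑_{a + b = u} 2 ^ (a - 1) * 2 ^ (b - 1) - 1 = 2 ^ (u - 2) * (u + 3) - 1`, out of `2 ^ (2u - 1)`.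
-/

open Finset

theorem List.exists_eq_append_cons_of_mem {α : Type*} {a : α} {l : List α} (h : a ∈ l) :
    ∃ s t, a ∉ s ∧ l = s ++ a :: t := by
  induction l with
  | nil => cases h
  | cons b l ih =>
    by_cases hb : b = a
    · exact ⟨[], l, List.not_mem_nil, by rw [hb]; rfl⟩
    · obtain ⟨s, t, hs, rfl⟩ := ih ((List.mem_cons.1 h).resolve_left (Ne.symm hb))
      exact ⟨b :: s, t, by simp [hs, Ne.symm hb], rfl⟩

theorem List.append_cons_inj_of_notMem_left {α : Type*} [DecidableEq α] {s₁ s₂ t₁ t₂ : List α}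
    {a : α} (h₁ : a ∉ s₁) (h₂ : a ∉ s₂) (h : s₁ ++ a :: t₁ = s₂ ++ a :: t₂) :
    s₁ = s₂ ∧ t₁ = t₂ := by
  have hlen : s₁.length = s₂.length := by
    simpa [List.idxOf_append_of_notMem, h₁, h₂] using congrArg (List.idxOf a) h
  simpa using List.append_inj h hlen

def compositions (n : ℕ) : Finset (List ℕ) :=
  (univ : Finset (Composition n)).map ⟨Composition.blocks, fun _ _ => Composition.ext⟩

theorem mem_compositions {n : ℕ} {l : List ℕ} :
    l ∈ compositions n ↔ (∀ x ∈ l, 0 < x) ∧ l.sum = n := by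
  constructor
  · intro hl
    obtain ⟨c, -, rfl⟩ := mem_map.1 hl
    exact ⟨fun _ => c.blocks_pos, c.blocks_sum⟩
  · rintro ⟨hpos, hsum⟩
    exact mem_map.2 ⟨⟨l, hpos _, hsum⟩, mem_univ _, rfl⟩

theorem card_compositions (n : ℕ) : #(compositions n) = 2 ^ (n - 1) := by
  rw [compositions, card_map, card_univ, composition_card]

theorem filter_notMem_compositions_of_lt {u n : ℕ} (h : n < u) :
    {l ∈ compositions n | u ∉ l} = compositions n := by
  refine filter_true_of_mem fun l hl hu => ?_
  have := List.le_sum_of_mem hu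
  rw [(mem_compositions.1 hl).2] at this
  omega

theorem filter_mem_compositions_self {u : ℕ} (hu : 0 < u) :
    {l ∈ compositions u | u ∈ l} = {[u]} := by
  ext l
  simp only [mem_filter, mem_compositions, mem_singleton]
  constructor
  · rintro ⟨⟨hpos, hsum⟩, hul⟩
    obtain ⟨s, t, -, rfl⟩ := List.exists_eq_append_cons_of_mem hul
    simp only [List.sum_append, List.sum_cons] at hsum
    have hnil : ∀ r : List ℕ, (∀ x ∈ r, 0 < x) → r.sum = 0 → r = [] := fun r hr h0 =>
      List.eq_nil_iff_forall_not_mem.2 fun x hx => (hr x hx).ne' (List.sum_eq_zero_iff.1 h0 x hx)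
    rw [hnil s (fun x hx => hpos x (by simp [hx])) (by omega),
      hnil t (fun x hx => hpos x (by simp [hx])) (by omega)]
    rfl
  · rintro rfl
    simp [hu]

theorem filter_mem_compositions_eq_image {u n : ℕ} (hu : 0 < u) (hun : u ≤ n) :
    {l ∈ compositions n | u ∈ l} =
      ((antidiagonal (n - u)).biUnion fun ab =>
          {s ∈ compositions ab.1 | u ∉ s} ×ˢ compositions ab.2).image
        fun p => p.1 ++ u :: p.2 := by
  ext l
  simp only [mem_filter, mem_image, mem_biUnion, mem_product, mem_compositions,
    HasAntidiagonal.mem_antidiagonal, Prod.exists]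
  constructor
  · rintro ⟨⟨hpos, hsum⟩, hul⟩
    obtain ⟨s, t, hs, rfl⟩ := List.exists_eq_append_cons_of_mem hul
    simp only [List.sum_append, List.sum_cons] at hsum
    have hspos : ∀ x ∈ s, 0 < x := fun x hx => hpos x (by simp [hx])
    have htpos : ∀ x ∈ t, 0 < x := fun x hx => hpos x (by simp [hx])
    exact ⟨s, t, ⟨s.sum, t.sum, by omega, ⟨⟨hspos, rfl⟩, hs⟩, htpos, rfl⟩, rfl⟩
  · rintro ⟨s, t, ⟨a, b, hab, ⟨⟨hs, rfl⟩, hus⟩, ht, rfl⟩, rfl⟩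
    refine ⟨⟨fun x hx => ?_, ?_⟩, by simp⟩
    · simp only [List.mem_append, List.mem_cons] at hx
      rcases hx with hx | rfl | hx
      exacts [hs x hx, hu, ht x hx]
    · simp only [List.sum_append, List.sum_cons]
      omega

theorem card_filter_mem_compositions {u n : ℕ} (hu : 0 < u) (hun : u ≤ n) :
    #{l ∈ compositions n | u ∈ l} =
      ∑ ab ∈ antidiagonal (n - u),
        #{s ∈ compositions ab.1 | u ∉ s} * #(compositions ab.2) := by
  rw [filter_mem_compositions_eq_image hu hun, card_image_of_injOn, card_biUnion]
  · simp only [card_product]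
  · intro ab _ cd _ hne
    refine disjoint_left.2 fun p hab hcd => hne ?_
    simp only [mem_product, mem_filter, mem_compositions] at hab hcd
    exact Prod.ext (hab.1.1.2.symm.trans hcd.1.1.2) (hab.2.2.symm.trans hcd.2.2)
  · rintro ⟨s₁, t₁⟩ h₁ ⟨s₂, t₂⟩ h₂ h
    simp only [coe_biUnion, Set.mem_iUnion, mem_coe, mem_product, mem_filter] at h₁ h₂
    obtain ⟨-, -, ⟨-, hs₁⟩, -⟩ := h₁
    obtain ⟨-, -, ⟨-, hs₂⟩, -⟩ := h₂
    obtain ⟨rfl, rfl⟩ := List.append_cons_inj_of_notMem_left hs₁ hs₂ h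
    rfl

theorem card_filter_notMem_compositions_self {u : ℕ} (hu : 0 < u) :
    #{l ∈ compositions u | u ∉ l} + 1 = 2 ^ (u - 1) := by
  have h := card_filter_add_card_filter_not (s := compositions u) (u ∈ ·)
  rw [filter_mem_compositions_self hu, card_singleton, card_compositions] at h
  omega

theorem card_filter_mem_compositions_two_mul {u : ℕ} (hu : 0 < u) :
    #{l ∈ compositions (2 * u) | u ∈ l} + 1 =
      ∑ ab ∈ antidiagonal u, 2 ^ (ab.1 - 1) * 2 ^ (ab.2 - 1) := by
  obtain ⟨v, rfl⟩ := Nat.exists_eq_add_one_of_ne_zero hu.ne'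
  have hterm : ∀ ab ∈ antidiagonal v,
      #{s ∈ compositions ab.1 | v + 1 ∉ s} * #(compositions (ab.2 + 1)) =
        2 ^ (ab.1 - 1) * 2 ^ (ab.2 + 1 - 1) := by
    intro ab hab
    rw [HasAntidiagonal.mem_antidiagonal] at hab
    rw [filter_notMem_compositions_of_lt (by omega), card_compositions, card_compositions]
  rw [card_filter_mem_compositions hu (by omega), show 2 * (v + 1) - (v + 1) = v + 1 by omega,
    Nat.sum_antidiagonal_succ', Nat.sum_antidiagonal_succ', sum_congr rfl hterm,
    card_compositions]
  dsimp only
  rw [add_right_comm, Nat.zero_sub, pow_zero, mul_one, mul_one,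
    card_filter_notMem_compositions_self hu, Nat.add_sub_cancel]

theorem four_mul_sum_antidiagonal_two_pow_pred_mul {u : ℕ} (hu : 0 < u) :
    4 * ∑ ab ∈ antidiagonal u, 2 ^ (ab.1 - 1) * 2 ^ (ab.2 - 1) = 2 ^ u * (u + 3) := by
  obtain ⟨v, rfl⟩ := Nat.exists_eq_add_one_of_ne_zero hu.ne'
  rw [Nat.sum_antidiagonal_eq_sum_range_succ_mk, sum_range_succ, sum_range_succ']
  dsimp only
  simp only [Nat.add_sub_cancel, Nat.sub_zero, Nat.sub_self, Nat.zero_sub, pow_zero]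
  have hmid : 2 * ∑ k ∈ range v, 2 ^ k * 2 ^ (v + 1 - (k + 1) - 1) = v * 2 ^ v := by
    calc 2 * ∑ k ∈ range v, 2 ^ k * 2 ^ (v + 1 - (k + 1) - 1)
        = ∑ _k ∈ range v, 2 ^ v := by
          rw [mul_sum]
          refine sum_congr rfl fun k hk => ?_
          rw [← mul_assoc, ← pow_succ', ← pow_add]
          congr 1
          have := mem_range.1 hk
          omega
      _ = v * 2 ^ v := by simp
  rw [pow_succ]
  linear_combination 2 * hmid

/-- For u ≥ 1, the number of compositions of 2u in which no part equals u is
2^(2u-1) - 2^(u-2)(u+3) + 1 (with rational arithmetic, 2^(u-2) meaning the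
rational power when u = 1). -/
theorem card_compositions_avoiding_u (u : ℕ) (hu : 1 ≤ u) :
    (Set.ncard {l : List ℕ | (∀ x ∈ l, 0 < x) ∧ (∀ x ∈ l, x ≠ u) ∧ l.sum = 2 * u} : ℚ)
      = 2 ^ (2 * u - 1) - 2 ^ ((u : ℤ) - 2) * ((u : ℚ) + 3) + 1 := by
  have hset : {l : List ℕ | (∀ x ∈ l, 0 < x) ∧ (∀ x ∈ l, x ≠ u) ∧ l.sum = 2 * u} =
      ↑{l ∈ compositions (2 * u) | u ∉ l} := by
    ext l
    simp only [Set.mem_ofPred_eq, coe_filter, mem_compositions, List.forall_mem_ne']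
    tauto
  have htotal : #{l ∈ compositions (2 * u) | u ∈ l} + #{l ∈ compositions (2 * u) | u ∉ l} =
      2 ^ (2 * u - 1) := by
    rw [← card_compositions]
    exact card_filter_add_card_filter_not _
  have hcontain : 4 * (#{l ∈ compositions (2 * u) | u ∈ l} + 1) = 2 ^ u * (u + 3) := by
    rw [card_filter_mem_compositions_two_mul hu, four_mul_sum_antidiagonal_two_pow_pred_mul hu]
  have hpow : (2 : ℚ) ^ ((u : ℤ) - 2) = 2 ^ u / 4 := by
    rw [zpow_sub₀ two_ne_zero, zpow_natCast]
    norm_num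
  rw [hset, Set.ncard_coe_finset, hpow]
  qify at htotal hcontain
  linarith
end

section
/- For u ≥ 1, the number of compositions of 2u with at least two parts and in which no part equals u is 2^(2u-1) - 2^(u-2)·(u+3) (with rational arithmetic for u = 1). -/
open Finset

def comps (n : ℕ) : Finset (List ℕ) :=
  if n = 0 then {[]} else
    (Finset.range n).attach.biUnion fun k =>
      (comps k.1).image (List.cons (n - k.1))
termination_by n
decreasing_by exact Finset.mem_range.mp k.2

lemma mem_comps (n : ℕ) (l : List ℕ) :
    l ∈ comps n ↔ (∀ x ∈ l, 0 < x) ∧ l.sum = n := by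
  induction n using Nat.strong_induction_on generalizing l with
  | _ n ih =>
    rw [comps]
    split_ifs with h
    · subst h
      simp only [Finset.mem_singleton]
      constructor
      · rintro rfl; simp
      · rintro ⟨hp, hs⟩
        cases l with
        | nil => rfl
        | cons a t =>
          exfalso
          have : 0 < a := hp a (by simp)
          simp [List.sum_cons] at hs; omega
    · simp only [Finset.mem_biUnion, Finset.mem_attach, Finset.mem_image, true_and,
        Subtype.exists, Finset.mem_range]
      constructor
      · rintro ⟨k, hk, t, ht, rfl⟩
        rw [ih k hk] at ht
        obtain ⟨hp, hs⟩ := ht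
        refine ⟨?_, by simp [hs]; omega⟩
        intro x hx
        rcases List.mem_cons.mp hx with rfl | hx
        · omega
        · exact hp x hx
      · rintro ⟨hp, hs⟩
        cases l with
        | nil => simp at hs; omega
        | cons a t =>
          have ha : 0 < a := hp a (by simp)
          have hat : a + t.sum = n := by simpa using hs
          refine ⟨t.sum, by omega, t, ?_, by rw [show n - t.sum = a by omega]⟩
          rw [ih t.sum (by omega)]
          exact ⟨fun x hx => hp x (by simp [hx]), rfl⟩


lemma filter_comps_eq (p : ℕ → Prop) [DecidablePred p] (n : ℕ) (hn : n ≠ 0) :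
    (comps n).filter (fun l => ∀ x ∈ l, p x)
      = ((Finset.range n).filter fun k => p (n - k)).biUnion fun k =>
          ((comps k).filter (fun l => ∀ x ∈ l, p x)).image (List.cons (n - k)) := by
  ext l
  simp only [Finset.mem_filter, Finset.mem_biUnion, Finset.mem_image, Finset.mem_range,
    mem_comps]
  constructor
  · rintro ⟨⟨hp, hs⟩, hq⟩
    cases l with
    | nil => simp at hs; omega
    | cons a t =>
      have ha : 0 < a := hp a (by simp)
      have hat : a + t.sum = n := by simpa using hs
      refine ⟨t.sum, ⟨by omega, by rw [show n - t.sum = a by omega]; exact hq a (by simp)⟩,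
        t, ⟨⟨fun x hx => hp x (by simp [hx]), rfl⟩, fun x hx => hq x (by simp [hx])⟩,
        by rw [show n - t.sum = a by omega]⟩
  · rintro ⟨k, ⟨hk, hpk⟩, t, ⟨⟨hp, hs⟩, hq⟩, rfl⟩
    refine ⟨⟨?_, by simp [hs]; omega⟩, ?_⟩
    · intro x hx
      rcases List.mem_cons.mp hx with rfl | hx
      · omega
      · exact hp x hx
    · intro x hx
      rcases List.mem_cons.mp hx with rfl | hx
      · exact hpk
      · exact hq x hx

lemma card_filter_comps (p : ℕ → Prop) [DecidablePred p] (n : ℕ) (hn : n ≠ 0) :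
    ((comps n).filter (fun l => ∀ x ∈ l, p x)).card
      = ∑ k ∈ (Finset.range n).filter (fun k => p (n - k)),
          ((comps k).filter (fun l => ∀ x ∈ l, p x)).card := by
  rw [filter_comps_eq p n hn, Finset.card_biUnion]
  · refine Finset.sum_congr rfl fun k hk => ?_
    exact Finset.card_image_of_injective _ (fun a b h => by simpa using h)
  · intro k₁ h₁ k₂ h₂ hne
    simp only [Finset.disjoint_left, Finset.mem_image, Finset.mem_filter, mem_comps]
    rintro l ⟨t₁, ⟨⟨_, hs₁⟩, _⟩, rfl⟩ ⟨t₂, ⟨⟨_, hs₂⟩, _⟩, h⟩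
    have : t₁ = t₂ := (List.cons.injEq _ _ _ _ ▸ h.symm).2
    exact hne (by rw [← hs₁, this, hs₂])


noncomputable def A (u n : ℕ) : ℕ := ((comps n).filter (fun l => ∀ x ∈ l, x ≠ u)).card

noncomputable def S (u n : ℕ) : ℕ := ∑ k ∈ Finset.range n, A u k

lemma A_zero (u : ℕ) : A u 0 = 1 := by
  have h : comps 0 = {[]} := by
    ext l
    simp only [mem_comps, Finset.mem_singleton]
    constructor
    · rintro ⟨hp, hs⟩
      cases l with
      | nil => rfl
      | cons a t => have := hp a (by simp); simp at hs; omega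
    · rintro rfl; simp
  rw [A, h]
  rw [Finset.filter_singleton]
  simp

lemma A_lt (u n : ℕ) (h1 : 1 ≤ n) (h2 : n < u) : A u n = S u n := by
  rw [A, card_filter_comps _ n (by omega), S]
  congr 1
  · rw [Finset.filter_true_of_mem]
    intro k hk
    simp only [Finset.mem_range] at hk
    omega

lemma A_ge (u n : ℕ) (hu : 1 ≤ u) (h : u ≤ n) : A u n + A u (n - u) = S u n := by
  rw [A, card_filter_comps _ n (by omega), S]
  have hfe : (Finset.range n).filter (fun k => n - k ≠ u) = (Finset.range n).erase (n - u) := by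
    ext k
    simp only [Finset.mem_filter, Finset.mem_erase, Finset.mem_range]
    omega
  rw [hfe, ← Finset.sum_erase_add _ _ (show n - u ∈ Finset.range n by simp; omega)]
  rfl


lemma S_succ (u n : ℕ) : S u (n+1) = S u n + A u n := Finset.sum_range_succ _ _

lemma two_ne : (2:ℚ) ≠ 0 := two_ne_zero

lemma S_formula (u : ℕ) (hu : 1 ≤ u) : ∀ n, 1 ≤ n → n ≤ u → (S u n : ℚ) = 2^((n:ℤ)-1) := by
  intro n
  induction n with
  | zero => omega
  | succ n ih =>
    intro _ hn
    rw [S_succ]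
    push_cast
    rcases Nat.eq_zero_or_pos n with rfl | hpos
    · simp [S, A_zero]
    · rw [A_lt u n hpos (by omega), ih hpos (by omega)]
      simp only [zpow_sub₀ two_ne, zpow_add₀ two_ne, zpow_one, zpow_natCast]
      ring

lemma A_lt_formula (u n : ℕ) (hu : 1 ≤ u) (h1 : 1 ≤ n) (h2 : n < u) :
    (A u n : ℚ) = 2^((n:ℤ)-1) := by
  rw [A_lt u n h1 h2]; exact S_formula u hu n h1 (by omega)

lemma A_at_u (u : ℕ) (hu : 1 ≤ u) : (A u u : ℚ) = 2^((u:ℤ)-1) - 1 := by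
  have h := A_ge u u hu le_rfl
  have h2 := S_formula u hu u hu le_rfl
  simp only [Nat.sub_self, A_zero] at h
  have : ((A u u : ℕ) : ℚ) + 1 = (S u u : ℚ) := by exact_mod_cast congrArg (Nat.cast : ℕ → ℚ) h
  linarith [this, h2.symm ▸ this]


lemma A_ge_cast (u n : ℕ) (hu : 1 ≤ u) (h : u ≤ n) :
    (A u n : ℚ) = (S u n : ℚ) - (A u (n - u) : ℚ) := by
  rw [← A_ge u n hu h]
  push_cast
  ring

lemma phase2 (u : ℕ) (hu : 1 ≤ u) : ∀ m, 1 ≤ m → m ≤ u →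
    ((A u (u+m) : ℚ) = 2^((u:ℤ)+m-1) - ((m:ℚ)+3)*2^((m:ℤ)-2) + (if m = u then 1 else 0)) ∧
    ((S u (u+m) : ℚ) = 2^((u:ℤ)+m-1) - ((m:ℚ)+1)*2^((m:ℤ)-2)) := by
  intro m
  induction m with
  | zero => omega
  | succ m ih =>
    intro _ hm
    rcases Nat.eq_zero_or_pos m with rfl | hmpos
    · -- base case m+1 = 1
      have hS : (S u (u+1) : ℚ) = 2^((u:ℤ)) - 1 := by
        rw [S_succ]
        push_cast
        rw [S_formula u hu u hu le_rfl, A_at_u u hu]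
        simp only [zpow_sub₀ two_ne, zpow_one]
        ring
      constructor
      · rw [A_ge_cast u (u+1) hu (by omega), hS]
        simp only [Nat.add_sub_cancel_left]
        by_cases hu1 : u = 1
        · subst hu1
          rw [A_at_u 1 le_rfl, if_pos rfl]
          norm_num
        · rw [A_lt_formula u 1 hu le_rfl (by omega), if_neg (by omega)]
          push_cast
          simp only [zpow_sub₀ two_ne, zpow_add₀ two_ne, zpow_one, zpow_natCast]
          ring
      · rw [hS]
        push_cast
        simp only [zpow_sub₀ two_ne, zpow_add₀ two_ne, zpow_one, zpow_natCast]
        ring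
    · -- step
      obtain ⟨ihA, ihS⟩ := ih hmpos (by omega)
      rw [if_neg (by omega)] at ihA
      have hS : (S u (u+(m+1)) : ℚ)
          = 2^((u:ℤ)+((m:ℤ)+1)-1) - ((m:ℚ)+2)*2^(((m:ℤ)+1)-2) := by
        rw [show u+(m+1) = (u+m)+1 by ring, S_succ]
        push_cast
        rw [ihS, ihA]
        simp only [zpow_sub₀ two_ne, zpow_add₀ two_ne, zpow_one, zpow_natCast]
        ring
      constructor
      · rw [A_ge_cast u (u+(m+1)) hu (by omega), hS]
        simp only [Nat.add_sub_cancel_left]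
        rcases eq_or_lt_of_le hm with h1 | h1
        · have hc : (u:ℤ) = (m:ℤ)+1 := by push_cast [← h1]; ring
          have hq : (u:ℚ) = (m:ℚ)+1 := by rw [← h1]; push_cast; ring
          rw [h1, A_at_u u hu, if_pos rfl, hc, hq]
          push_cast
          simp only [zpow_sub₀ two_ne, zpow_add₀ two_ne, zpow_one, zpow_natCast]
          ring
        · rw [A_lt_formula u (m+1) hu (by omega) h1, if_neg (by omega)]
          push_cast
          simp only [zpow_sub₀ two_ne, zpow_add₀ two_ne, zpow_one, zpow_natCast]
          ring
      · rw [hS]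
        push_cast
        simp only [zpow_sub₀ two_ne, zpow_add₀ two_ne, zpow_one, zpow_natCast]
        ring

/-- For u ≥ 1, the number of compositions of 2u with at least two parts and no
part equal to u is 2^(2u-1) - 2^(u-2)(u+3) (with rational arithmetic for u = 1). -/
theorem card_nontrivial_compositions_avoiding_u (u : ℕ) (hu : 1 ≤ u) :
    (Set.ncard {l : List ℕ | (∀ x ∈ l, 0 < x) ∧ (∀ x ∈ l, x ≠ u) ∧ 2 ≤ l.length ∧
        l.sum = 2 * u} : ℚ)
      = 2 ^ (2 * u - 1) - 2 ^ ((u : ℤ) - 2) * ((u : ℚ) + 3) := by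
  have hset : {l : List ℕ | (∀ x ∈ l, 0 < x) ∧ (∀ x ∈ l, x ≠ u) ∧ 2 ≤ l.length ∧
        l.sum = 2 * u}
      = ↑(((comps (2*u)).filter (fun l => ∀ x ∈ l, x ≠ u)).erase [2*u]) := by
    ext l
    simp only [Set.mem_setOf_eq, Finset.coe_erase, Set.mem_diff, Finset.mem_coe,
      Finset.mem_filter, mem_comps, Set.mem_singleton_iff]
    constructor
    · rintro ⟨hp, hq, hlen, hs⟩
      refine ⟨⟨⟨hp, hs⟩, hq⟩, ?_⟩
      intro h; subst h; simp at hlen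
    · rintro ⟨⟨⟨hp, hs⟩, hq⟩, hne⟩
      refine ⟨hp, hq, ?_, hs⟩
      match l, hs, hne with
      | [], hs, _ => simp at hs; omega
      | [a], hs, hne =>
        exfalso; apply hne
        simp only [List.sum_cons, List.sum_nil, add_zero] at hs
        rw [hs]
      | a :: b :: t, _, _ => simp
  rw [hset, Set.ncard_coe_finset]
  have hmem : [2*u] ∈ (comps (2*u)).filter (fun l => ∀ x ∈ l, x ≠ u) := by
    rw [Finset.mem_filter, mem_comps]
    refine ⟨⟨?_, by simp⟩, ?_⟩ <;> intro x hx <;> simp at hx <;> omega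
  rw [Finset.card_erase_of_mem hmem]
  have hAdef : ((comps (2*u)).filter (fun l => ∀ x ∈ l, x ≠ u)).card = A u (2*u) := rfl
  rw [hAdef]
  have hpos : 1 ≤ A u (2*u) := by
    rw [← hAdef]
    exact Finset.card_pos.mpr ⟨[2*u], hmem⟩
  rw [Nat.cast_sub hpos]
  have hA : (A u (2*u) : ℚ) = 2^((u:ℤ)+u-1) - ((u:ℚ)+3)*2^((u:ℤ)-2) + 1 := by
    have h := (phase2 u hu u hu le_rfl).1
    rw [if_pos rfl] at h
    rw [show 2*u = u+u by ring]
    exact h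
  rw [hA]
  rw [show ((2:ℚ))^(2*u-1) = 2^((u:ℤ)+u-1) by
    rw [← zpow_natCast]; congr 1; omega]
  push_cast
  ring
end

section
/- The generating function G⁰(x) = (1/2)(1 + √((1-x²)/(1-9x²))) satisfies, as a formal power series, G⁰(x) = 1 + Σ_{κ≥1} |V⁰_κ| x^κ, where V⁰_κ is the set of finite sequences of nonzero integers whose absolute values sum to κ and whose entries sum to 0. -/
/-- The generating series 1 + Σ_{κ≥1} |V⁰_κ| x^κ of the numbers of lists of
nonzero integers with absolute values summing to κ and entries summing to 0. -/
noncomputable def G0 : PowerSeries ℚ :=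
  PowerSeries.mk (fun κ => if κ = 0 then 1 else
    (Set.ncard {ν : List ℤ | (∀ x ∈ ν, x ≠ 0) ∧
      (ν.map (fun x => |x|)).sum = (κ : ℤ) ∧ ν.sum = 0} : ℚ))

/-!
Record a list of nonzero integers by the sum `M` of its positive entries and the sum `L` of the
absolute values of its negative entries. Splitting off the first entry shows that the bivariate
generating function of these counts is `(1 - u) (1 - v) / (1 - 2u - 2v + 3uv)`, and writing
`1 - 2u - 2v + 3uv = (1 - 2u) (1 - 2v) - uv` gives the coefficients
`K m l = ∑ j, C(m, j) C(l, j) 2 ^ (m - j) 2 ^ (l - j)` of its denominator's inverse. On the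
diagonal this yields `2 |V⁰_{2n}| = r n - r (n - 1)` with `r n = K n n`, that is
`2 G⁰(x) - 1 = (1 - x²) R(x²)` for `R = ∑ r n tⁿ`. A Zeilberger certificate gives the recurrence
`(n + 2) r (n + 2) = (10 n + 15) r (n + 1) - 9 (n + 1) r n`, i.e. the differential equation
`(1 - 10t + 9t²) R' = (5 - 9t) R`, so `R² (1 - t) (1 - 9t)` has derivative zero and equals `1`.
-/
open Finset PowerSeries

namespace SignedCompositions

/-- The coefficient of `x ^ m` in `x ^ j / (1 - 2 x) ^ (j + 1)`. -/
def binomWeight (j m : ℕ) : ℚ := m.choose j * 2 ^ m / 2 ^ j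

theorem binomWeight_eq_zero_of_lt {j m : ℕ} (h : m < j) : binomWeight j m = 0 := by
  simp [binomWeight, Nat.choose_eq_zero_of_lt h]

theorem binomWeight_zero_succ (m : ℕ) : binomWeight 0 (m + 1) = 2 * binomWeight 0 m := by
  simp only [binomWeight, Nat.choose_zero_right, Nat.cast_one, pow_zero, div_one, pow_succ]
  ring

theorem binomWeight_succ_succ (j m : ℕ) :
    binomWeight (j + 1) (m + 1) = 2 * binomWeight (j + 1) m + binomWeight j m := by
  simp only [binomWeight, Nat.choose_succ_succ, Nat.cast_add, pow_succ]
  field_simp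
  ring

/-- The coefficient of `u ^ m v ^ l` in
`1 / (1 - 2u - 2v + 3uv) = ∑ j, (uv) ^ j / ((1 - 2u) (1 - 2v)) ^ (j + 1)`. -/
def kernelCoeff (m l : ℕ) : ℚ := ∑ j ∈ range (m + l + 1), binomWeight j m * binomWeight j l

theorem kernelCoeff_eq_sum_range {m l N : ℕ} (h : m < N) :
    kernelCoeff m l = ∑ j ∈ range N, binomWeight j m * binomWeight j l := by
  have hvan : ∀ j ≥ m + 1, binomWeight j m * binomWeight j l = 0 := fun j hj => by
    rw [binomWeight_eq_zero_of_lt (by omega), zero_mul]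
  rw [kernelCoeff, eventually_constant_sum hvan (by omega), eventually_constant_sum hvan h]

theorem kernelCoeff_comm (m l : ℕ) : kernelCoeff m l = kernelCoeff l m := by
  simp only [kernelCoeff, add_comm m l, mul_comm (binomWeight _ m)]

theorem kernelCoeff_zero_left (l : ℕ) : kernelCoeff 0 l = 2 ^ l := by
  simp [kernelCoeff_eq_sum_range (l := l) zero_lt_one, binomWeight]

theorem kernelCoeff_zero_zero : kernelCoeff 0 0 = 1 := by
  rw [kernelCoeff_zero_left, pow_zero]

theorem kernelCoeff_succ_succ (m l : ℕ) :
    kernelCoeff (m + 1) (l + 1) =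
      2 * kernelCoeff m (l + 1) + 2 * kernelCoeff (m + 1) l - 3 * kernelCoeff m l := by
  set b := binomWeight
  set N := m + l + 3
  have hK : ∀ p q, p < N → kernelCoeff p q = ∑ j ∈ range N, b j p * b j q :=
    fun p q h => kernelCoeff_eq_sum_range h
  -- the operator `f (m + 1) - 2 f m`, applied in both variables, lowers `j` by one
  have hshift : ∑ j ∈ range N, (b j (m + 1) - 2 * b j m) * (b j (l + 1) - 2 * b j l) =
      kernelCoeff m l := by
    rw [sum_range_succ', kernelCoeff_eq_sum_range (N := m + l + 2) (by omega)]
    simp [b, binomWeight_zero_succ, binomWeight_succ_succ]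
  have hexpand : ∑ j ∈ range N, (b j (m + 1) - 2 * b j m) * (b j (l + 1) - 2 * b j l) =
      ∑ j ∈ range N, b j (m + 1) * b j (l + 1) - 2 * ∑ j ∈ range N, b j m * b j (l + 1) -
        2 * ∑ j ∈ range N, b j (m + 1) * b j l + 4 * ∑ j ∈ range N, b j m * b j l := by
    simp only [mul_sum, ← sum_add_distrib, ← sum_sub_distrib]
    exact sum_congr rfl fun j _ => by ring
  rw [hK _ _ (by omega)] at hshift
  rw [hK _ _ (by omega), hK _ _ (by omega), hK _ _ (by omega), hK _ _ (by omega)]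
  linear_combination hexpand.symm.trans hshift

theorem kernelCoeff_succ_diag (m : ℕ) :
    kernelCoeff (m + 1) (m + 1) = 4 * kernelCoeff (m + 1) m - 3 * kernelCoeff m m := by
  rw [kernelCoeff_succ_succ, kernelCoeff_comm m (m + 1)]
  ring

/-- The coefficient of `u ^ m v ^ l` in `uv / (1 - 2u - 2v + 3uv)`. -/
def shiftedKernel : ℕ → ℕ → ℚ
  | m + 1, l + 1 => kernelCoeff m l
  | _, _ => 0

theorem shiftedKernel_comm (m l : ℕ) : shiftedKernel m l = shiftedKernel l m := by
  rcases m with _ | m <;> rcases l with _ | l <;> simp [shiftedKernel, kernelCoeff_comm]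

theorem shiftedKernel_succ_succ {m l : ℕ} (h : m + l ≠ 0) :
    shiftedKernel (m + 1) (l + 1) =
      2 * shiftedKernel m (l + 1) + 2 * shiftedKernel (m + 1) l - 3 * shiftedKernel m l := by
  rcases m with _ | m <;> rcases l with _ | l
  · contradiction
  · simp [shiftedKernel, kernelCoeff_zero_left, pow_succ, mul_comm]
  · simp [shiftedKernel, kernelCoeff_comm _ 0, kernelCoeff_zero_left, pow_succ, mul_comm]
  · exact kernelCoeff_succ_succ m l

theorem abs_sum_le_sum_map_abs (ν : List ℤ) : |ν.sum| ≤ (ν.map (fun x => |x|)).sum := by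
  simpa using Multiset.abs_sum_le_sum_abs (s := (ν : Multiset ℤ))

/-- Lists of nonzero integers whose positive entries sum to `M` and negative entries to `-L`. -/
def signedComps (M L : ℕ) : Set (List ℤ) :=
  {ν | (∀ x ∈ ν, x ≠ 0) ∧ (ν.map (fun x => |x|)).sum = M + L ∧ ν.sum = M - L}

def posHeadComps (M L : ℕ) : Set (List ℤ) := {ν | ν ∈ signedComps M L ∧ 0 < ν.headD 0}

theorem cons_mem_signedComps {a : ℤ} {t : List ℤ} {M L : ℕ} :
    a :: t ∈ signedComps M L ↔ a ≠ 0 ∧ (∀ x ∈ t, x ≠ 0) ∧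
      |a| + (t.map (fun x => |x|)).sum = M + L ∧ a + t.sum = M - L := by
  simp [signedComps, and_assoc]

theorem signedComps_zero_zero : signedComps 0 0 = {[]} := by
  ext ν
  rcases ν with _ | ⟨a, t⟩
  · simp [signedComps]
  · simp only [cons_mem_signedComps, Set.mem_singleton_iff, reduceCtorEq, iff_false]
    rintro ⟨ha, -, habs, -⟩
    have := abs_pos.2 ha
    have := (abs_nonneg t.sum).trans (abs_sum_le_sum_map_abs t)
    push_cast at habs
    linarith

theorem posHeadComps_zero (L : ℕ) : posHeadComps 0 L = ∅ := by
  ext ν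
  rcases ν with _ | ⟨a, t⟩
  · simp [posHeadComps]
  · simp only [posHeadComps, cons_mem_signedComps, List.headD_cons, Set.mem_ofPred_eq,
      Set.mem_empty_iff_false, iff_false]
    rintro ⟨⟨-, -, habs, hsum⟩, ha⟩
    have := (neg_le_abs t.sum).trans (abs_sum_le_sum_map_abs t)
    rw [abs_of_pos ha] at habs
    push_cast at habs hsum
    linarith

theorem map_neg_mem_signedComps {ν : List ℤ} {M L : ℕ} :
    ν.map Neg.neg ∈ signedComps M L ↔ ν ∈ signedComps L M := by
  simp only [signedComps, Set.mem_ofPred_eq, List.forall_mem_map, ne_eq, neg_eq_zero,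
    List.map_map, Function.comp_def, abs_neg, ← List.sum_neg]
  constructor <;> rintro ⟨h1, h2, h3⟩ <;> exact ⟨h1, by rw [h2]; ring, by linarith⟩

theorem signedComps_eq_union {M L : ℕ} (h : M + L ≠ 0) :
    signedComps M L = posHeadComps M L ∪ List.map Neg.neg '' posHeadComps L M := by
  ext ν
  simp only [Set.mem_union, Set.mem_image, posHeadComps, Set.mem_ofPred_eq]
  constructor
  · intro hν
    rcases ν with _ | ⟨a, t⟩
    · simp only [signedComps, Set.mem_ofPred_eq, List.map_nil, List.sum_nil] at hν
      omega
    rcases (cons_mem_signedComps.1 hν).1.lt_or_gt with ha | ha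
    · refine Or.inr ⟨(a :: t).map Neg.neg, ⟨map_neg_mem_signedComps.2 hν, by simpa⟩, by simp⟩
    · exact Or.inl ⟨hν, ha⟩
  · rintro (⟨hν, -⟩ | ⟨ν', ⟨hν', -⟩, rfl⟩)
    · exact hν
    · exact map_neg_mem_signedComps.2 hν'

theorem disjoint_posHeadComps_image_neg (M L : ℕ) :
    Disjoint (posHeadComps M L) (List.map Neg.neg '' posHeadComps L M) := by
  rw [Set.disjoint_left]
  rintro _ ⟨-, hpos⟩ ⟨ν, ⟨-, hneg⟩, rfl⟩
  rcases ν with _ | ⟨a, t⟩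
  · simp at hpos
  · simp only [List.map_cons, List.headD_cons] at hpos hneg
    linarith

theorem cons_one_mem_signedComps_succ {t : List ℤ} {M L : ℕ} :
    1 :: t ∈ signedComps (M + 1) L ↔ t ∈ signedComps M L := by
  rw [cons_mem_signedComps, abs_one]
  simp only [signedComps, Set.mem_ofPred_eq, Nat.cast_add, Nat.cast_one]
  constructor
  · rintro ⟨-, h1, h2, h3⟩; exact ⟨h1, by linarith, by linarith⟩
  · rintro ⟨h1, h2, h3⟩; exact ⟨one_ne_zero, h1, by linarith, by linarith⟩

theorem cons_succ_mem_signedComps_succ {a : ℤ} {t : List ℤ} {M L : ℕ} (ha : 0 < a) :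
    (a + 1) :: t ∈ signedComps (M + 1) L ↔ a :: t ∈ signedComps M L := by
  simp only [cons_mem_signedComps, abs_of_pos ha, abs_of_pos (by linarith : 0 < a + 1),
    Nat.cast_add, Nat.cast_one]
  constructor
  · rintro ⟨-, h1, h2, h3⟩; exact ⟨ha.ne', h1, by linarith, by linarith⟩
  · rintro ⟨-, h1, h2, h3⟩; exact ⟨by linarith, h1, by linarith, by linarith⟩

theorem posHeadComps_succ (M L : ℕ) :
    posHeadComps (M + 1) L =
      List.cons 1 '' signedComps M L ∪ List.modifyHead (· + 1) '' posHeadComps M L := by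
  ext ν
  simp only [Set.mem_union, Set.mem_image, posHeadComps, Set.mem_ofPred_eq]
  constructor
  · rintro ⟨hν, hpos⟩
    rcases ν with _ | ⟨a, t⟩
    · simp at hpos
    rw [List.headD_cons] at hpos
    obtain rfl | ⟨a, ha, rfl⟩ : a = 1 ∨ ∃ b, 0 < b ∧ a = b + 1 := by
      rcases eq_or_ne a 1 with h | h
      exacts [Or.inl h, Or.inr ⟨a - 1, by omega, by ring⟩]
    · exact Or.inl ⟨t, cons_one_mem_signedComps_succ.1 hν, rfl⟩
    · exact Or.inr ⟨a :: t, ⟨(cons_succ_mem_signedComps_succ ha).1 hν, ha⟩, rfl⟩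
  · rintro (⟨t, ht, rfl⟩ | ⟨_ | ⟨a, t⟩, ⟨hν, hpos⟩, rfl⟩)
    · exact ⟨cons_one_mem_signedComps_succ.2 ht, one_pos⟩
    · simp at hpos
    · rw [List.headD_cons] at hpos
      exact ⟨(cons_succ_mem_signedComps_succ hpos).2 hν,
        by rw [List.modifyHead_cons, List.headD_cons]; linarith⟩

theorem modifyHead_add_one_injective :
    Function.Injective (List.modifyHead (· + 1 : ℤ → ℤ)) := by
  rintro (_ | ⟨a, t⟩) (_ | ⟨b, u⟩) h <;> simp_all

theorem disjoint_image_cons_one_image_modifyHead (M L : ℕ) :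
    Disjoint (List.cons 1 '' signedComps M L) (List.modifyHead (· + 1) '' posHeadComps M L) := by
  rw [Set.disjoint_left]
  rintro _ ⟨t, -, rfl⟩ ⟨_ | ⟨a, u⟩, ⟨-, hpos⟩, h⟩
  · simp at hpos
  · simp only [List.headD_cons] at hpos
    simp only [List.modifyHead_cons, List.cons.injEq] at h
    linarith [h.1]

/-- The coefficient of `u ^ M v ^ L` in `(1 - u) (1 - v) / (1 - 2u - 2v + 3uv)`. -/
def compCount (M L : ℕ) : ℚ :=
  shiftedKernel (M + 1) (L + 1) - shiftedKernel M (L + 1) - shiftedKernel (M + 1) L +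
    shiftedKernel M L

def posHeadCount (M L : ℕ) : ℚ := shiftedKernel M (L + 1) - shiftedKernel M L

theorem compCount_zero_zero : compCount 0 0 = 1 := by
  simp [compCount, shiftedKernel, kernelCoeff_zero_zero]

theorem compCount_eq_add {M L : ℕ} (h : M + L ≠ 0) :
    compCount M L = posHeadCount M L + posHeadCount L M := by
  simp only [compCount, posHeadCount, shiftedKernel_comm L, shiftedKernel_succ_succ h]
  ring

theorem card_posHeadComps (M L : ℕ)
    (h : ∀ i < M, (signedComps i L).Finite ∧ ((signedComps i L).ncard : ℚ) = compCount i L) :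
    (posHeadComps M L).Finite ∧ ((posHeadComps M L).ncard : ℚ) = posHeadCount M L := by
  induction M with
  | zero => simp [posHeadComps_zero, posHeadCount, shiftedKernel]
  | succ M ih =>
    obtain ⟨hPfin, hPcard⟩ := ih fun i hi => h i (by omega)
    obtain ⟨hSfin, hScard⟩ := h M (by omega)
    rw [posHeadComps_succ]
    refine ⟨(hSfin.image _).union (hPfin.image _), ?_⟩
    rw [Set.ncard_union_eq (disjoint_image_cons_one_image_modifyHead M L) (hSfin.image _)
      (hPfin.image _), Set.ncard_image_of_injective _ List.cons_injective,
      Set.ncard_image_of_injective _ modifyHead_add_one_injective]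
    push_cast
    rw [hScard, hPcard, posHeadCount, posHeadCount, compCount]
    ring

theorem card_signedComps (M L : ℕ) :
    (signedComps M L).Finite ∧ ((signedComps M L).ncard : ℚ) = compCount M L := by
  induction hk : M + L using Nat.strong_induction_on generalizing M L with
  | _ k ih =>
  by_cases h : M + L = 0
  · obtain ⟨rfl, rfl⟩ : M = 0 ∧ L = 0 := by omega
    simp [signedComps_zero_zero, compCount_zero_zero]
  obtain ⟨hPfin, hPcard⟩ := card_posHeadComps M L fun i hi => ih (i + L) (by omega) i L rfl
  obtain ⟨hNfin, hNcard⟩ := card_posHeadComps L M fun i hi => ih (i + M) (by omega) i M rfl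
  rw [signedComps_eq_union h]
  refine ⟨hPfin.union (hNfin.image _), ?_⟩
  rw [Set.ncard_union_eq (disjoint_posHeadComps_image_neg M L) hPfin (hNfin.image _),
    Set.ncard_image_of_injective _ (List.map_injective_iff.2 neg_injective)]
  push_cast
  rw [hPcard, hNcard, compCount_eq_add h]

theorem even_sum_map_abs_sub_sum (ν : List ℤ) : Even ((ν.map (fun x => |x|)).sum - ν.sum) := by
  induction ν with
  | nil => simp
  | cons a t ih =>
    have ha : Even (|a| - a) := Int.even_sub.2 even_abs
    simpa [add_sub_add_comm] using ha.add ih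

theorem coeff_G0_of_odd {n : ℕ} (hn : Odd n) : coeff n G0 = 0 := by
  have hempty : {ν : List ℤ | (∀ x ∈ ν, x ≠ 0) ∧
      (ν.map (fun x => |x|)).sum = (n : ℤ) ∧ ν.sum = 0} = ∅ := by
    refine Set.eq_empty_of_forall_notMem fun ν ⟨_, habs, hsum⟩ => ?_
    have := even_sum_map_abs_sub_sum ν
    rw [habs, hsum, sub_zero, Int.even_coe_nat] at this
    exact Nat.not_even_iff_odd.2 hn this
  rw [G0, coeff_mk, if_neg hn.pos.ne', hempty, Set.ncard_empty, Nat.cast_zero]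

theorem coeff_G0_add_self {M : ℕ} (hM : M ≠ 0) : coeff (M + M) G0 = compCount M M := by
  have hset : {ν : List ℤ | (∀ x ∈ ν, x ≠ 0) ∧
      (ν.map (fun x => |x|)).sum = ((M + M : ℕ) : ℤ) ∧ ν.sum = 0} = signedComps M M := by
    simp [signedComps]
  rw [G0, coeff_mk, if_neg (by omega), hset, (card_signedComps M M).2]

theorem two_mul_compCount_diag (n : ℕ) :
    2 * compCount (n + 1) (n + 1) = kernelCoeff (n + 1) (n + 1) - kernelCoeff n n := by
  simp only [compCount, shiftedKernel, kernelCoeff_comm n (n + 1), kernelCoeff_succ_diag]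
  ring

def diagonalSeries : ℚ⟦X⟧ := mk fun m => kernelCoeff m m

theorem two_mul_G0_sub_one : 2 * G0 - 1 = expand 2 two_ne_zero ((1 - X) * diagonalSeries) := by
  ext n
  rw [coeff_expand, two_mul, map_sub, map_add]
  rcases Nat.even_or_odd n with ⟨M, rfl⟩ | hn
  · rw [if_pos (even_iff_two_dvd.1 ⟨M, rfl⟩), show (M + M) / 2 = M by omega]
    rcases M with _ | n
    · simp [G0, diagonalSeries, kernelCoeff_zero_zero]
    · rw [coeff_G0_add_self n.succ_ne_zero, coeff_one, if_neg (by omega), sub_mul, one_mul,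
        map_sub, coeff_succ_X_mul, diagonalSeries, coeff_mk, coeff_mk, ← two_mul_compCount_diag]
      ring
  · rw [if_neg (Nat.not_even_iff_odd.2 hn ∘ even_iff_two_dvd.2), coeff_G0_of_odd hn, coeff_one,
      if_neg hn.pos.ne']
    ring

theorem cast_choose_succ_right_mul (n k : ℕ) :
    (n.choose (k + 1) : ℚ) * (k + 1) = n.choose k * (n - k) := by
  rcases le_or_gt k n with h | h
  · have := congrArg (Nat.cast : ℕ → ℚ) (Nat.choose_succ_right_eq n k)
    push_cast [Nat.cast_sub h] at this
    exact this
  · simp [Nat.choose_eq_zero_of_lt h, Nat.choose_eq_zero_of_lt (by omega : n < k + 1)]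

/-- Zeilberger's certificate for the recurrence of `kernelCoeff m m` below. -/
def diagCertificate (m : ℕ) : ℕ → ℚ
  | 0 => 0
  | i + 1 => binomWeight i (m + 1) ^ 2 *
      ((5 * (m + 1) - 3 * i) * (3 * (m + 1) - i) + 4 * (m + 1)) / (4 * (m + 1))

theorem diagCertificate_spec (m j : ℕ) :
    (m + 2) * binomWeight j (m + 2) ^ 2 - (10 * m + 15) * binomWeight j (m + 1) ^ 2 +
      9 * (m + 1) * binomWeight j m ^ 2 = diagCertificate m j - diagCertificate m (j + 1) := by
  rcases j with _ | i
  · simp only [binomWeight, diagCertificate, Nat.choose_zero_right, Nat.cast_zero, Nat.cast_one,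
      one_mul, pow_zero, div_one, mul_zero, sub_zero, zero_sub]
    field_simp
    ring
  -- every binomial coefficient involved is a rational multiple of `y`
  set y : ℚ := ((m + 1).choose i : ℚ)
  have hi : (i : ℚ) + 1 ≠ 0 := by positivity
  have hm : (m : ℚ) + 1 ≠ 0 := by positivity
  have r1 := cast_choose_succ_right_mul (m + 1) i
  have r2 := congrArg (Nat.cast : ℕ → ℚ) (Nat.add_one_mul_choose_eq (m + 1) i)
  have r3 := congrArg (Nat.cast : ℕ → ℚ) (Nat.add_one_mul_choose_eq m i)
  have r4 := cast_choose_succ_right_mul m i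
  push_cast at r1 r2 r3 r4
  have e1 : ((m + 1).choose (i + 1) : ℚ) = y * (m + 1 - i) / (i + 1) := by
    rw [eq_div_iff hi]
    linear_combination r1
  have e2 : ((m + 2).choose (i + 1) : ℚ) = y * (m + 2) / (i + 1) := by
    rw [eq_div_iff hi]
    linear_combination -r2
  have e4 : (m.choose (i + 1) : ℚ) = y * (m + 1 - i) * (m - i) / ((m + 1) * (i + 1)) := by
    rw [eq_div_iff (mul_ne_zero hm hi)]
    linear_combination (m + 1) * r4 + (m - i) * (r3 + r1)
  simp only [binomWeight, diagCertificate]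
  push_cast
  rw [e1, e2, e4]
  field_simp
  ring

theorem kernelCoeff_diag_recurrence (m : ℕ) :
    (m + 2) * kernelCoeff (m + 2) (m + 2) =
      (10 * m + 15) * kernelCoeff (m + 1) (m + 1) - 9 * (m + 1) * kernelCoeff m m := by
  have htop : diagCertificate m (m + 3) = 0 := by
    simp [diagCertificate, binomWeight_eq_zero_of_lt (by omega : m + 1 < m + 2)]
  have hsum := sum_range_sub' (diagCertificate m) (m + 3)
  rw [← sum_congr rfl fun j _ => diagCertificate_spec m j, htop, diagCertificate, sub_zero,
    sum_add_distrib, sum_sub_distrib, ← mul_sum, ← mul_sum, ← mul_sum] at hsum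
  simp only [sq, ← kernelCoeff_eq_sum_range (by omega : m + 2 < m + 3),
    ← kernelCoeff_eq_sum_range (by omega : m + 1 < m + 3),
    ← kernelCoeff_eq_sum_range (by omega : m < m + 3)] at hsum
  linear_combination hsum

theorem kernelCoeff_one_one : kernelCoeff 1 1 = 5 := by
  norm_num [kernelCoeff, binomWeight, sum_range_succ]

theorem derivative_diagonalSeries :
    (1 - 10 * X + 9 * X ^ 2) * d⁄dX ℚ diagonalSeries = (5 - 9 * X) * diagonalSeries := by
  ext n
  rcases n with _ | _ | n <;>
    simp only [← map_ofNat (C (R := ℚ)), sub_mul, add_mul, mul_assoc, pow_two, map_sub, map_add,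
      one_mul, coeff_C_mul, coeff_succ_X_mul, coeff_zero_X_mul, coeff_derivative, diagonalSeries,
      coeff_mk]
  · rw [kernelCoeff_one_one, kernelCoeff_zero_zero]
    norm_num
  · have := kernelCoeff_diag_recurrence 0
    rw [kernelCoeff_one_one, kernelCoeff_zero_zero] at *
    push_cast at this ⊢
    linear_combination this
  · have := kernelCoeff_diag_recurrence (n + 1)
    push_cast at this ⊢
    linear_combination this

theorem diagonalSeries_sq_mul : diagonalSeries ^ 2 * (1 - 10 * X + 9 * X ^ 2) = 1 := by
  have hΔ : d⁄dX ℚ (1 - 10 * X + 9 * X ^ 2 : ℚ⟦X⟧) = 18 * X - 10 := by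
    simp only [← map_ofNat (C (R := ℚ)), map_add, map_sub, Derivation.map_one_eq_zero,
      Derivation.leibniz, Derivation.leibniz_pow, derivative_C, derivative_X, smul_eq_mul]
    simp only [map_ofNat]
    ring
  apply derivative.ext
  · rw [Derivation.leibniz, Derivation.leibniz_pow, hΔ, smul_eq_mul, smul_eq_mul, nsmul_eq_mul,
      Derivation.map_one_eq_zero]
    linear_combination (2 * diagonalSeries) * derivative_diagonalSeries
  · simp [diagonalSeries, kernelCoeff_zero_zero]

end SignedCompositions

open SignedCompositions

/-- G⁰(x) = (1/2)(1 + √((1-x²)/(1-9x²))) as formal power series: equivalently,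
2·G⁰ - 1 is the square root (with constant term 1; indeed the constant
coefficient of G⁰ is 1 by definition) of (1-x²)/(1-9x²), i.e.
(2G⁰ - 1)² (1 - 9x²) = 1 - x². -/
theorem G0_generating_function :
    (2 * G0 - 1) ^ 2 * (1 - 9 * PowerSeries.X ^ 2) = 1 - PowerSeries.X ^ 2 := by
  have h := congrArg (expand 2 two_ne_zero) diagonalSeries_sq_mul
  simp only [map_mul, map_pow, map_add, map_sub, map_one, map_ofNat, expand_X] at h
  rw [two_mul_G0_sub_one, map_mul, map_sub, map_one, expand_X]
  linear_combination (1 - X ^ 2) * h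
end

section
/- For u ≥ 1, the number of finite sequences of nonzero integers whose absolute values sum to 2u and whose entries sum to 0 equals Σ_{m=0}^{u} (-1)^u 9^m C(1/2, u-m) C(-1/2, m) / 2, i.e. one half times (-1)^u times the coefficient Σ_{m=0}^{u} 3^{2m} binom(1/2, u-m) binom(-1/2, m). -/
/-- Generalized binomial coefficient α(α-1)···(α-k+1)/k! for rational α. -/
noncomputable def gbinom (α : ℚ) (k : ℕ) : ℚ :=
  (∏ i ∈ Finset.range k, (α - i)) / (Nat.factorial k)

/-!
Let `M(A, B)` count the lists of nonzero integers whose positive entries sum to `A` and whose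
negative entries sum to `-B`; the set in the theorem has `M(u, u)` elements. Splitting off the
first entry gives `M(A, B) = ∑_{a<A} M(a, B) + ∑_{b<B} M(A, b)`, which makes the partial sums
`∑_{a≤A, b≤B} M(a, b)` the coefficients of `1 / (1 - 2x - 2y + 3xy)`, that is
`[t^B] (t + 2)^A (2t + 1)^B`. On the diagonal these are `e n = ∑_k 4^(n-k) (n choose k)^2`,
and `2 M(n+1, n+1) = e (n+1) - e n`. A WZ certificate for the sum and the differential equation of
the series show that `e n` and the coefficients of `((1 - x)(1 - 9x))^(-1/2)` satisfy the same
three-term recurrence, so they agree. Finally `(1 - x)^(1/2) = (1 - x) (1 - x)^(-1/2)` turns the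
right-hand side into `(e u - e (u-1)) / 2` as well.
-/

open Finset

def signedComps (A B : ℕ) : Finset (List ℤ) :=
  if A = 0 ∧ B = 0 then {[]} else
    (range A).attach.biUnion (fun a => (signedComps a B).image (((A - a : ℕ) : ℤ) :: ·)) ∪
    (range B).attach.biUnion (fun b => (signedComps A b).image (-((B - b : ℕ) : ℤ) :: ·))
termination_by A + B
decreasing_by
  · have := mem_range.1 a.2; omega
  · have := mem_range.1 b.2; omega

theorem signedComps_eq (A B : ℕ) : signedComps A B = if A = 0 ∧ B = 0 then {[]} else
    (range A).attach.biUnion (fun a => (signedComps a B).image (((A - a : ℕ) : ℤ) :: ·)) ∪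
    (range B).attach.biUnion (fun b => (signedComps A b).image (-((B - b : ℕ) : ℤ) :: ·)) := by
  rw [signedComps]

theorem mem_signedComps {A B : ℕ} {ν : List ℤ} :
    ν ∈ signedComps A B ↔ (∀ x ∈ ν, x ≠ 0) ∧
      (ν.map Int.toNat).sum = A ∧ (ν.map fun x => (-x).toNat).sum = B := by
  induction ν generalizing A B with
  | nil =>
    rw [signedComps_eq A B]
    split_ifs with h
    · simp [h.1, h.2]
    · simp only [mem_union, mem_biUnion, mem_image, reduceCtorEq, and_false, exists_false, or_self,
        false_iff, List.not_mem_nil, List.map_nil, List.sum_nil, not_and]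
      omega
  | cons x l ih =>
    rw [signedComps_eq A B]
    split_ifs with h
    · simp only [mem_singleton, reduceCtorEq, false_iff, List.mem_cons, List.map_cons,
        List.sum_cons, forall_eq_or_imp, not_and]
      omega
    · simp only [mem_union, mem_biUnion, mem_image, mem_attach, true_and, Subtype.exists,
        mem_range, List.cons.injEq, List.mem_cons, List.map_cons, List.sum_cons, forall_eq_or_imp]
      constructor
      · rintro (⟨a, ha, l', hl', rfl, rfl⟩ | ⟨b, hb, l', hl', rfl, rfl⟩) <;>
          obtain ⟨hnz, hp, hn⟩ := ih.1 hl' <;> exact ⟨⟨by omega, hnz⟩, by omega, by omega⟩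
      · rintro ⟨⟨hx, hnz⟩, hp, hn⟩
        rcases hx.lt_or_gt with hx | hx
        · exact .inr ⟨_, by omega, l, ih.2 ⟨hnz, by omega, rfl⟩, by omega, rfl⟩
        · exact .inl ⟨_, by omega, l, ih.2 ⟨hnz, rfl, by omega⟩, by omega, rfl⟩

theorem card_signedComps_zero_zero : #(signedComps 0 0) = 1 := by
  simp [signedComps_eq]

theorem disjoint_image_cons {α : Type*} [DecidableEq α] {s t : Finset (List α)} {x y : α}
    (h : x ≠ y) : Disjoint (s.image (x :: ·)) (t.image (y :: ·)) := by
  simp only [disjoint_left, mem_image]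
  rintro _ ⟨l, -, rfl⟩ ⟨l', -, h'⟩
  exact h (List.cons_eq_cons.1 h').1.symm

theorem card_signedComps {A B : ℕ} (h : ¬(A = 0 ∧ B = 0)) :
    #(signedComps A B) =
      ∑ a ∈ range A, #(signedComps a B) + ∑ b ∈ range B, #(signedComps A b) := by
  rw [signedComps_eq, if_neg h, card_union_of_disjoint, card_biUnion, card_biUnion]
  · simp only [card_image_of_injective _ List.cons_injective,
      sum_attach (range A) fun a => #(signedComps a B),
      sum_attach (range B) fun b => #(signedComps A b)]
  · refine fun b _ b' _ hbb' => disjoint_image_cons fun heq => hbb' (Subtype.ext ?_)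
    have := mem_range.1 b.2
    have := mem_range.1 b'.2
    omega
  · refine fun a _ a' _ haa' => disjoint_image_cons fun heq => haa' (Subtype.ext ?_)
    have := mem_range.1 a.2
    have := mem_range.1 a'.2
    omega
  · refine (disjoint_biUnion_left _ _ _).2 fun a _ =>
      (disjoint_biUnion_right _ _ _).2 fun b _ => disjoint_image_cons ?_
    have := mem_range.1 a.2
    omega

theorem sum_map_abs_eq_toNat_add_toNat_neg (ν : List ℤ) :
    (ν.map fun x => |x|).sum = ((ν.map Int.toNat).sum + (ν.map fun x => (-x).toNat).sum : ℕ) := by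
  induction ν with
  | nil => simp
  | cons x l ih =>
    simp only [List.map_cons, List.sum_cons, ih]
    push_cast
    cases abs_cases x <;> omega

theorem sum_eq_toNat_sub_toNat_neg (ν : List ℤ) :
    ν.sum = ((ν.map Int.toNat).sum : ℕ) - ((ν.map fun x => (-x).toNat).sum : ℕ) := by
  induction ν with
  | nil => simp
  | cons x l ih =>
    simp only [List.map_cons, List.sum_cons, ih]
    push_cast
    omega

theorem setOf_eq_signedComps (u : ℕ) :
    {ν : List ℤ | (∀ x ∈ ν, x ≠ 0) ∧ (ν.map fun x => |x|).sum = 2 * (u : ℤ) ∧ ν.sum = 0} =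
      signedComps u u := by
  ext ν
  simp only [Set.mem_ofPred_eq, mem_coe, mem_signedComps]
  rw [sum_map_abs_eq_toNat_add_toNat_neg, sum_eq_toNat_sub_toNat_neg ν]
  constructor
  · rintro ⟨hnz, habs, hsum⟩
    exact ⟨hnz, by omega, by omega⟩
  · rintro ⟨hnz, hpos, hneg⟩
    exact ⟨hnz, by omega, by omega⟩

def boxCount (A B : ℕ) : ℕ := ∑ a ∈ range (A + 1), ∑ b ∈ range (B + 1), #(signedComps a b)

theorem boxCount_succ_left (A B : ℕ) :
    boxCount (A + 1) B = boxCount A B + ∑ b ∈ range (B + 1), #(signedComps (A + 1) b) :=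
  sum_range_succ _ _

theorem boxCount_succ_right (A B : ℕ) :
    boxCount A (B + 1) = boxCount A B + ∑ a ∈ range (A + 1), #(signedComps a (B + 1)) := by
  simp only [boxCount, sum_range_succ _ (B + 1), sum_add_distrib]

theorem card_signedComps_add_boxCount (A B : ℕ) :
    #(signedComps (A + 1) (B + 1)) + boxCount A (B + 1) + boxCount (A + 1) B =
      boxCount (A + 1) (B + 1) + boxCount A B := by
  rw [boxCount_succ_right (A + 1), boxCount_succ_right A, boxCount_succ_left A,
    sum_range_succ (fun a => #(signedComps a (B + 1))) (A + 1)]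
  ring

theorem boxCount_rec (A B : ℕ) :
    boxCount (A + 1) (B + 1) + 3 * boxCount A B =
      2 * boxCount A (B + 1) + 2 * boxCount (A + 1) B := by
  have h := card_signedComps_add_boxCount A B
  rw [card_signedComps (by omega), boxCount_succ_right A B, boxCount_succ_left A B] at h
  rw [boxCount_succ_right A B, boxCount_succ_left A B]
  omega

theorem boxCount_zero_right (A : ℕ) : boxCount A 0 = 2 ^ A := by
  induction A with
  | zero => simp [boxCount, card_signedComps_zero_zero]
  | succ A ih =>
    have row : boxCount A 0 = ∑ a ∈ range (A + 1), #(signedComps a 0) := by simp [boxCount]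
    rw [boxCount_succ_left, sum_range_one, card_signedComps (by omega), ← row, ih]
    simp [pow_succ, mul_two]

theorem boxCount_zero_left (B : ℕ) : boxCount 0 B = 2 ^ B := by
  induction B with
  | zero => simp [boxCount, card_signedComps_zero_zero]
  | succ B ih =>
    have col : boxCount 0 B = ∑ b ∈ range (B + 1), #(signedComps 0 b) := by simp [boxCount]
    rw [boxCount_succ_right, sum_range_one, card_signedComps (by omega), ← col, ih]
    simp [pow_succ, mul_two]

section GridCoeff

open Polynomial

/-- The coefficient of `x^A y^B` in `1 / (1 - 2x - 2y + 3xy)`. -/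
noncomputable def gridCoeff (A B : ℕ) : ℕ := ((X + 2) ^ A * (2 * X + 1) ^ B).coeff B

theorem gridCoeff_rec (A B : ℕ) :
    gridCoeff (A + 1) (B + 1) + 3 * gridCoeff A B =
      2 * gridCoeff A (B + 1) + 2 * gridCoeff (A + 1) B := by
  set P : ℕ[X] := (X + 2) ^ A * (2 * X + 1) ^ B
  have key : (X + 2) * (2 * X + 1) * P + X * (3 * P) =
      2 * ((2 * X + 1) * P) + X * (2 * ((X + 2) * P)) := by ring
  -- multiplying by `X` shifts coefficients, so every term is read off at index `B + 1`
  have := congrArg (coeff · (B + 1)) key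
  simp only [coeff_add, coeff_X_mul, coeff_ofNat_mul] at this
  simp only [gridCoeff, pow_succ]
  convert this using 3 <;> simp only [P] <;> ring_nf

theorem gridCoeff_zero_right (A : ℕ) : gridCoeff A 0 = 2 ^ A := by
  simp [gridCoeff, coeff_zero_eq_eval_zero]

theorem coeff_two_mul_X_add_one_pow (n k : ℕ) :
    ((2 * X + 1 : ℕ[X]) ^ n).coeff k = 2 ^ k * n.choose k := by
  have : (2 * X + 1 : ℕ[X]) ^ n = ((X + 1) ^ n).comp (C 2 * X) := by simp
  rw [this, comp_C_mul_X_coeff, coeff_X_add_one_pow, Nat.cast_id, mul_comm]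

theorem gridCoeff_zero_left (B : ℕ) : gridCoeff 0 B = 2 ^ B := by
  simp [gridCoeff, coeff_two_mul_X_add_one_pow]

theorem gridCoeff_self (n : ℕ) :
    gridCoeff n n = ∑ k ∈ range (n + 1), 4 ^ (n - k) * n.choose k ^ 2 := by
  rw [gridCoeff, coeff_mul, Nat.sum_antidiagonal_eq_sum_range_succ_mk]
  refine sum_congr rfl fun k hk => ?_
  have hk : k ≤ n := Nat.lt_succ_iff.1 (mem_range.1 hk)
  rw [show (X + 2 : ℕ[X]) = X + C 2 by simp, coeff_X_add_C_pow, coeff_two_mul_X_add_one_pow,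
    Nat.choose_symm hk, Nat.cast_id, show 4 = 2 ^ 2 from rfl, ← pow_mul]
  ring

end GridCoeff

theorem eq_of_grid_rec {f g : ℕ → ℕ → ℕ}
    (hf : ∀ A B, f (A + 1) (B + 1) + 3 * f A B = 2 * f A (B + 1) + 2 * f (A + 1) B)
    (hg : ∀ A B, g (A + 1) (B + 1) + 3 * g A B = 2 * g A (B + 1) + 2 * g (A + 1) B)
    (h₁ : ∀ A, f A 0 = g A 0) (h₂ : ∀ B, f 0 B = g 0 B) (A B : ℕ) : f A B = g A B := by
  induction A generalizing B with
  | zero => exact h₂ B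
  | succ A ihA =>
    induction B with
    | zero => exact h₁ A.succ
    | succ B ihB =>
      have := hf A B; have := hg A B; have := ihA B; have := ihA (B + 1)
      omega

theorem boxCount_eq_gridCoeff (A B : ℕ) : boxCount A B = gridCoeff A B :=
  eq_of_grid_rec boxCount_rec gridCoeff_rec
    (fun A => by rw [boxCount_zero_right, gridCoeff_zero_right])
    (fun B => by rw [boxCount_zero_left, gridCoeff_zero_left]) A B

theorem two_mul_card_signedComps_add_gridCoeff (n : ℕ) :
    2 * #(signedComps (n + 1) (n + 1)) + gridCoeff n n = gridCoeff (n + 1) (n + 1) := by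
  have h := card_signedComps_add_boxCount n n
  have hrec := gridCoeff_rec n n
  simp only [boxCount_eq_gridCoeff] at h
  omega

theorem cast_choose_succ_mul {R : Type*} [Ring R] (n k : ℕ) :
    (n.choose (k + 1) : R) * (k + 1) = n.choose k * (n - k) := by
  rcases le_or_gt k n with hk | hk
  · rw [← Nat.cast_sub hk]
    exact_mod_cast congrArg (Nat.cast : ℕ → R) (Nat.choose_succ_right_eq n k)
  · simp [Nat.choose_eq_zero_of_lt hk, Nat.choose_eq_zero_of_lt (Nat.lt_succ_of_lt hk)]

noncomputable def diagSummand (n k : ℕ) : ℚ := 4 ^ n / 4 ^ k * n.choose k ^ 2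

/-- A WZ certificate for `diagSummand`, as produced by Zeilberger's algorithm. -/
noncomputable def diagCertificate (n k : ℕ) : ℚ :=
  4 ^ n / 4 ^ k * k * (-15 * k * n.choose k ^ 2 + (12 - 16 * k) * n.choose k * n.choose (k - 1)
    + (4 - 4 * k) * n.choose (k - 1) ^ 2)

theorem diagSummand_telescope (m k : ℕ) :
    (m + 1) * (m + 2) * diagSummand (m + 2) k - 5 * (m + 1) * (2 * m + 3) * diagSummand (m + 1) k
      + 9 * (m + 1) ^ 2 * diagSummand m k =
        diagCertificate (m + 1) (k + 1) - diagCertificate (m + 1) k := by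
  rcases k with _ | j
  · simp [diagSummand, diagCertificate]
    ring
  · have pascal₀ : ((m + 1).choose (j + 1) : ℚ) = m.choose j + m.choose (j + 1) := by
      exact_mod_cast Nat.choose_succ_succ' m j
    have pascal₁ : ((m + 2).choose (j + 1) : ℚ) = (m + 1).choose j + (m + 1).choose (j + 1) := by
      exact_mod_cast Nat.choose_succ_succ' (m + 1) j
    have r₀ := cast_choose_succ_mul (R := ℚ) m j
    have r₁ := cast_choose_succ_mul (R := ℚ) (m + 1) j
    have r₂ := cast_choose_succ_mul (R := ℚ) (m + 1) (j + 1)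
    push_cast at r₀ r₁ r₂
    -- express every binomial coefficient through `(m + 1).choose j`
    have hx : ((m + 1).choose (j + 1) : ℚ) = (m + 1 - j) * (m + 1).choose j / (j + 1) := by
      rw [eq_div_iff (by positivity)]
      linear_combination r₁
    have hy : ((m + 1).choose (j + 2) : ℚ) = (m - j) * (m + 1).choose (j + 1) / (j + 2) := by
      rw [eq_div_iff (by positivity)]
      linear_combination r₂
    have hv : (m.choose (j + 1) : ℚ) = (m - j) * (m + 1).choose (j + 1) / (m + 1) := by
      rw [eq_div_iff (by positivity)]
      linear_combination r₀ - (m - j) * pascal₀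
    simp only [diagSummand, diagCertificate, Nat.add_sub_cancel]
    rw [pascal₁, hy, hv, hx]
    push_cast
    field_simp
    ring

theorem cast_gridCoeff_self {n N : ℕ} (h : n < N) :
    (gridCoeff n n : ℚ) = ∑ k ∈ range N, diagSummand n k := by
  rw [gridCoeff_self, Nat.cast_sum]
  refine (sum_congr rfl fun k hk => ?_).trans
    (sum_subset (range_subset_range.2 h) fun k _ hk => ?_)
  · push_cast
    rw [diagSummand, pow_sub₀ (4 : ℚ) (by norm_num) (Nat.lt_succ_iff.1 (mem_range.1 hk))]
    ring
  · rw [diagSummand, Nat.choose_eq_zero_of_lt (by simpa using hk)]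
    simp

theorem gridCoeff_diag_rec (m : ℕ) :
    (m + 2) * (gridCoeff (m + 2) (m + 2) : ℚ) =
      5 * (2 * m + 3) * gridCoeff (m + 1) (m + 1) - 9 * (m + 1) * gridCoeff m m := by
  have telescope := sum_range_sub (diagCertificate (m + 1)) (m + 3)
  rw [← sum_congr rfl fun k _ => diagSummand_telescope m k] at telescope
  simp only [diagCertificate, CharP.cast_eq_zero, mul_zero, zero_mul, sub_zero,
    Nat.choose_eq_zero_of_lt (show m + 1 < m + 3 by omega),
    Nat.choose_eq_zero_of_lt (show m + 1 < m + 3 - 1 by omega)] at telescope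
  rw [sum_add_distrib, sum_sub_distrib, ← mul_sum, ← mul_sum, ← mul_sum,
    ← cast_gridCoeff_self (by omega), ← cast_gridCoeff_self (by omega),
    ← cast_gridCoeff_self (by omega)] at telescope
  have hm : (m + 1 : ℚ) ≠ 0 := by positivity
  apply mul_left_cancel₀ hm
  linear_combination telescope

theorem eq_of_diag_rec {f g : ℕ → ℚ}
    (hf : ∀ m : ℕ, (m + 2) * f (m + 2) = 5 * (2 * m + 3) * f (m + 1) - 9 * (m + 1) * f m)
    (hg : ∀ m : ℕ, (m + 2) * g (m + 2) = 5 * (2 * m + 3) * g (m + 1) - 9 * (m + 1) * g m)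
    (h₀ : f 0 = g 0) (h₁ : f 1 = g 1) (n : ℕ) : f n = g n := by
  suffices ∀ n, f n = g n ∧ f (n + 1) = g (n + 1) from (this n).1
  intro n
  induction n with
  | zero => exact ⟨h₀, h₁⟩
  | succ n ih =>
    refine ⟨ih.2, mul_left_cancel₀ (show (n + 2 : ℚ) ≠ 0 by positivity) ?_⟩
    rw [hf, hg, ih.1, ih.2]

section Series

open PowerSeries

theorem gbinom_succ_mul (α : ℚ) (k : ℕ) :
    gbinom α (k + 1) * (k + 1) = gbinom α k * (α - k) := by
  simp only [gbinom, prod_range_succ, Nat.factorial_succ]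
  push_cast
  field_simp

theorem gbinom_eq_ringChoose (α : ℚ) (k : ℕ) : gbinom α k = Ring.choose α k := by
  rw [Ring.choose_eq_smul, ← Polynomial.aeval_eq_smeval, Polynomial.aeval_def,
    Polynomial.eval₂_eq_eval_map, descPochhammer_map, descPochhammer_eval_eq_prod_range, gbinom,
    smul_eq_mul, div_eq_inv_mul]

theorem coeff_rescale_binomialSeries (c α : ℚ) (n : ℕ) :
    coeff n (rescale c (binomialSeries ℚ α)) = c ^ n * gbinom α n := by
  rw [coeff_rescale, binomialSeries_coeff, gbinom_eq_ringChoose, smul_eq_mul, mul_one]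

theorem rescale_binomialSeries_add_one (c α : ℚ) :
    rescale c (binomialSeries ℚ (α + 1)) = (1 + C c * X) * rescale c (binomialSeries ℚ α) := by
  rw [binomialSeries_add, mul_comm, map_mul, ← Nat.cast_one, binomialSeries_nat, pow_one,
    map_add, map_one, rescale_X]

theorem one_add_mul_derivative_rescale_binomialSeries (c α : ℚ) :
    (1 + C c * X) * d⁄dX ℚ (rescale c (binomialSeries ℚ α)) =
      C (c * α) * rescale c (binomialSeries ℚ α) := by
  ext n
  rcases n with _ | n <;>
    simp only [add_mul, one_mul, map_add, mul_assoc, coeff_C_mul, coeff_zero_X_mul,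
      coeff_succ_X_mul, coeff_derivative, coeff_rescale_binomialSeries]
  · linear_combination c * gbinom_succ_mul α 0
  · have h := gbinom_succ_mul α (n + 1)
    push_cast at h ⊢
    linear_combination c ^ (n + 2) * h

theorem coeff_X_mul_derivative {R : Type*} [CommSemiring R] (f : R⟦X⟧) (n : ℕ) :
    coeff n (X * d⁄dX R f) = n * coeff n f := by
  rcases n with _ | n
  · simp
  · rw [coeff_succ_X_mul, coeff_derivative, mul_comm]
    push_cast
    ring

/-- `((1 - x)(1 - 9x))^(-1/2)` -/
noncomputable def diagSeries : ℚ⟦X⟧ :=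
  rescale (-1) (binomialSeries ℚ (-1/2 : ℚ)) * rescale (-9) (binomialSeries ℚ (-1/2 : ℚ))

theorem coeff_diagSeries_rec (m : ℕ) :
    (m + 2) * coeff (m + 2) diagSeries =
      5 * (2 * m + 3) * coeff (m + 1) diagSeries - 9 * (m + 1) * coeff m diagSeries := by
  set S := rescale (-1 : ℚ) (binomialSeries ℚ (-1/2 : ℚ))
  set T := rescale (-9 : ℚ) (binomialSeries ℚ (-1/2 : ℚ))
  have ode : (1 + C (-1) * X) * ((1 + C (-9) * X) * d⁄dX ℚ diagSeries) =
      C ((-1) * (-1/2)) * ((1 + C (-9) * X) * diagSeries) +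
        C ((-9) * (-1/2)) * ((1 + C (-1) * X) * diagSeries) := by
    rw [diagSeries, Derivation.leibniz, smul_eq_mul, smul_eq_mul]
    linear_combination
      (1 + C (-9) * X) * T * one_add_mul_derivative_rescale_binomialSeries (-1) _ +
        (1 + C (-1) * X) * S * one_add_mul_derivative_rescale_binomialSeries (-9) _
  have := congrArg (coeff (m + 1)) ode
  simp only [add_mul, mul_add, one_mul, mul_assoc, map_add, coeff_C_mul, coeff_succ_X_mul,
    coeff_X_mul_derivative, coeff_derivative] at this
  push_cast at this
  linear_combination this

theorem coeff_diagSeries_eq_gridCoeff (n : ℕ) : coeff n diagSeries = gridCoeff n n := by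
  refine eq_of_diag_rec (f := fun n => coeff n diagSeries) (g := fun n => (gridCoeff n n : ℚ))
    coeff_diagSeries_rec gridCoeff_diag_rec ?_ ?_ n
  · simp [diagSeries, coeff_mul, gridCoeff_zero_right]
  · have h : gridCoeff 1 1 = 5 := by
      have := gridCoeff_rec 0 0
      norm_num [gridCoeff_zero_left, gridCoeff_zero_right] at this
      omega
    simp [diagSeries, coeff_mul, Nat.antidiagonal_succ, h]
    norm_num

/-- `((1 - x) / (1 - 9x))^(1/2)` -/
noncomputable def sqrtRatioSeries : ℚ⟦X⟧ :=
  rescale (-9) (binomialSeries ℚ (-1/2 : ℚ)) * rescale (-1) (binomialSeries ℚ (1/2 : ℚ))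

theorem coeff_sqrtRatioSeries (u : ℕ) :
    coeff u sqrtRatioSeries = (-1) ^ u *
      ∑ m ∈ range (u + 1), 3 ^ (2 * m) * gbinom (1 / 2) (u - m) * gbinom (-(1 / 2)) m := by
  rw [sqrtRatioSeries, coeff_mul, Nat.sum_antidiagonal_eq_sum_range_succ
    (fun i j => coeff i (rescale (-9 : ℚ) _) * coeff j (rescale (-1 : ℚ) _)), mul_sum]
  refine sum_congr rfl fun m hm => ?_
  have hm : m + (u - m) = u := Nat.add_sub_cancel' (Nat.lt_succ_iff.1 (mem_range.1 hm))
  rw [coeff_rescale_binomialSeries, coeff_rescale_binomialSeries, ← hm, pow_add, pow_mul,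
    show (-9 : ℚ) = -1 * 3 ^ 2 by norm_num, mul_pow, hm, neg_div]
  ring

theorem sqrtRatioSeries_eq : sqrtRatioSeries = (1 + C (-1) * X) * diagSeries := by
  rw [sqrtRatioSeries, show (1/2 : ℚ) = -1/2 + 1 by norm_num, rescale_binomialSeries_add_one,
    diagSeries]
  ring

theorem coeff_succ_sqrtRatioSeries (n : ℕ) :
    coeff (n + 1) sqrtRatioSeries = coeff (n + 1) diagSeries - coeff n diagSeries := by
  simp only [sqrtRatioSeries_eq, add_mul, one_mul, mul_assoc, map_add, coeff_C_mul,
    coeff_succ_X_mul]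
  ring

end Series

/-- For u ≥ 1, |V⁰_{2u}| equals one half times (-1)^u times
Σ_{m=0}^{u} 3^{2m} binom(1/2, u-m) binom(-1/2, m). -/
theorem card_V0_binomial_formula (u : ℕ) (hu : 1 ≤ u) :
    (Set.ncard {ν : List ℤ | (∀ x ∈ ν, x ≠ 0) ∧
        (ν.map (fun x => |x|)).sum = 2 * (u : ℤ) ∧ ν.sum = 0} : ℚ)
      = (1 / 2) * (-1) ^ u * ∑ m ∈ Finset.range (u + 1),
          3 ^ (2 * m) * gbinom (1 / 2) (u - m) * gbinom (-(1 / 2)) m := by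
  obtain ⟨n, rfl⟩ : ∃ n, u = n + 1 := ⟨u - 1, by omega⟩
  have h := two_mul_card_signedComps_add_gridCoeff n
  rw [setOf_eq_signedComps, Set.ncard_coe_finset, mul_assoc, ← coeff_sqrtRatioSeries,
    coeff_succ_sqrtRatioSeries, coeff_diagSeries_eq_gridCoeff, coeff_diagSeries_eq_gridCoeff, ← h]
  push_cast
  ring
end

section
/- For u ≥ 0, |B_{2u+1}| + 1 = 2^{2u+1} - 2u - 1, where B_{2u+1} is the set of lists (b₁,...,bₙ) of nonzero elements of ℤ/(2u+1) such that b₁+...+bₙ = 0 in ℤ/(2u+1) and bᵢ ≡ -νᵢ (mod 2u+1) for some list (ν₁,...,νₙ) of integers with Σᵢ|νᵢ| = 2u+1. -/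
/-!
Write `b = -ν (mod κ)`. Since `κ ∣ Σ νᵢ`, `|Σ νᵢ| ≤ Σ |νᵢ| = κ` and
`Σ νᵢ ≡ Σ |νᵢ| = κ (mod 2)`, oddness of `κ` forces `Σ νᵢ = ±κ`; equality in the triangle
inequality makes all `νᵢ` of one sign, and nonvanishing mod `κ` makes them nonzero. So
`B_κ = P ∪ -P`, where `P = residueLists κ` is the set of residue lists of the compositions of `κ`
other than `(κ)`, and `|P| = 2^(κ-1) - 1`. A list lies in `P ∩ -P` iff its entries `x` satisfy
`Σ val x = Σ val (-x) = κ`; as `val x + val (-x) = κ`, it has length `2`, i.e. it is `[a, -a]`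
with `0 < a < κ`. Inclusion–exclusion gives `|B_κ| = 2^κ - κ - 1`.
-/

/-- B_κ : lists of nonzero residues modulo κ summing to 0 in ℤ/κ whose entries
are congruent to -νᵢ for some integer list ν with Σ|νᵢ| = κ. -/
def Bset (κ : ℕ) : Set (List (ZMod κ)) :=
  {b | (∀ x ∈ b, x ≠ 0) ∧ b.sum = 0 ∧
    ∃ ν : List ℤ, (ν.map (fun x => |x|)).sum = (κ : ℤ) ∧
      List.Forall₂ (fun (bi : ZMod κ) (νi : ℤ) => bi = -(νi : ZMod κ)) b ν}

open List

section OrderedGroup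

variable {α : Type*} [AddCommGroup α] [LinearOrder α] [IsOrderedAddMonoid α]

theorem List.abs_sum_le_sum_map_abs (l : List α) : |l.sum| ≤ (l.map abs).sum :=
  le_sum_of_subadditive abs abs_zero.le abs_add_le l

theorem List.nonneg_of_sum_eq_sum_map_abs {l : List α} (h : l.sum = (l.map abs).sum) :
    ∀ x ∈ l, 0 ≤ x := by
  induction l with
  | nil => simp
  | cons a l ih =>
    simp only [map_cons, sum_cons] at h
    have hl : l.sum ≤ (l.map abs).sum := (le_abs_self _).trans l.abs_sum_le_sum_map_abs
    obtain ⟨ha, hl⟩ := (add_eq_add_iff_eq_and_eq (le_abs_self a) hl).1 h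
    rintro x (_ | ⟨_, hx⟩)
    · exact ha ▸ abs_nonneg a
    · exact ih hl x hx

end OrderedGroup

theorem List.even_sum_map_abs_iff (l : List ℤ) : Even (l.map abs).sum ↔ Even l.sum := by
  induction l with
  | nil => simp
  | cons a l ih => simp [Int.even_add, ih, even_abs]

theorem List.sum_eq_or_eq_neg_of_dvd {n : ℕ} (hn : Odd n) {ν : List ℤ}
    (habs : (ν.map abs).sum = n) (hdvd : (n : ℤ) ∣ ν.sum) : ν.sum = n ∨ ν.sum = -n := by
  obtain ⟨m, hm⟩ := hdvd
  have hle : |ν.sum| ≤ n := habs ▸ ν.abs_sum_le_sum_map_abs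
  have hodd : ¬ Even ν.sum := by
    rw [← ν.even_sum_map_abs_iff, habs, Int.even_coe_nat, Nat.not_even_iff_odd]
    exact hn
  have hpos : (0 : ℤ) < n := by exact_mod_cast hn.pos
  have hm1 : -1 ≤ m ∧ m ≤ 1 := by
    rw [hm, abs_le] at hle
    constructor <;> nlinarith
  rcases hm1 with ⟨h1, h2⟩
  interval_cases m <;> simp_all

theorem List.forall₂_eq_apply_iff {α β : Type*} {f : β → α} {l : List α} {u : List β} :
    Forall₂ (fun a b => a = f b) l u ↔ l = u.map f := by
  rw [← forall₂_map_right_iff, forall₂_eq_eq_eq]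

theorem List.mem_image_map_neg_iff {α : Type*} [InvolutiveNeg α] [DecidableEq α]
    {s : Finset (List α)} {b : List α} : b ∈ s.image (map Neg.neg) ↔ b.map Neg.neg ∈ s := by
  have hinv : Function.Involutive (map (Neg.neg : α → α)) := fun b => by simp [map_map]
  rw [Finset.mem_image]
  constructor
  · rintro ⟨a, ha, rfl⟩
    rwa [hinv a]
  · exact fun h => ⟨_, h, hinv b⟩

theorem ZMod.val_add_val_neg {n : ℕ} [NeZero n] {x : ZMod n} (hx : x ≠ 0) :
    x.val + (-x).val = n := by
  rw [ZMod.neg_val, if_neg hx]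
  have := x.val_lt
  omega

namespace Composition

variable {n : ℕ}

def residues (c : Composition n) : List (ZMod n) := c.blocks.map (↑)

theorem sum_residues (c : Composition n) : c.residues.sum = 0 := by
  rw [residues, ← Nat.cast_list_sum, c.blocks_sum, ZMod.natCast_self]

theorem exists_map_natCast_blocks_eq {ν : List ℤ} (hpos : ∀ x ∈ ν, 0 < x) (hsum : ν.sum = n) :
    ∃ c : Composition n, c.blocks.map ((↑) : ℕ → ℤ) = ν := by
  have hν : (ν.map Int.toNat).map ((↑) : ℕ → ℤ) = ν := by
    rw [map_map]
    exact (map_congr_left fun x hx => Int.toNat_of_nonneg (hpos x hx).le).trans (map_id ν)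
  refine ⟨⟨ν.map Int.toNat, fun hi => ?_, ?_⟩, hν⟩
  · obtain ⟨x, hx, rfl⟩ := mem_map.1 hi
    exact Int.lt_toNat.2 (hpos x hx)
  · exact_mod_cast (Nat.cast_list_sum _).trans (hν.symm ▸ hsum)

variable [NeZero n]

theorem lt_of_mem_blocks_of_ne_single {c : Composition n} (hc : c ≠ single n n.pos_of_neZero)
    {i : ℕ} (hi : i ∈ c.blocks) : i < n := by
  obtain ⟨j, rfl⟩ := List.mem_iff_get.1 hi
  exact (ne_single_iff _).1 hc j

theorem map_val_residues {c : Composition n} (hc : c ≠ single n n.pos_of_neZero) :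
    c.residues.map ZMod.val = c.blocks := by
  rw [residues, map_map]
  refine (map_congr_left fun i hi => ?_).trans (map_id _)
  exact ZMod.val_cast_of_lt (lt_of_mem_blocks_of_ne_single hc hi)

theorem ne_zero_of_mem_residues {c : Composition n} (hc : c ≠ single n n.pos_of_neZero)
    {x : ZMod n} (hx : x ∈ c.residues) : x ≠ 0 := by
  obtain ⟨i, hi, rfl⟩ := mem_map.1 hx
  rw [← ZMod.val_pos, ZMod.val_cast_of_lt (lt_of_mem_blocks_of_ne_single hc hi)]
  exact c.blocks_pos hi

end Composition

section Residues

variable {n : ℕ} [NeZero n]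

def residueLists (n : ℕ) [NeZero n] : Finset (List (ZMod n)) :=
  (Finset.univ.erase (Composition.single n n.pos_of_neZero)).image Composition.residues

theorem card_residueLists : (residueLists n).card = 2 ^ (n - 1) - 1 := by
  rw [residueLists, Finset.card_image_of_injOn, Finset.card_erase_of_mem (Finset.mem_univ _),
    Finset.card_univ, composition_card]
  intro c hc d hd h
  simp only [Finset.coe_erase, Finset.coe_univ, Set.mem_sdiff, Set.mem_singleton_iff] at hc hd
  rw [Composition.ext_iff, ← Composition.map_val_residues hc.2, ← Composition.map_val_residues hd.2,
    h]

theorem mem_residueLists_iff {b : List (ZMod n)} :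
    b ∈ residueLists n ↔ (∀ x ∈ b, x ≠ 0) ∧ (b.map ZMod.val).sum = n := by
  constructor
  · intro hb
    obtain ⟨c, hc, rfl⟩ := Finset.mem_image.1 hb
    have hc := (Finset.mem_erase.1 hc).1
    exact ⟨fun x => c.ne_zero_of_mem_residues hc, by rw [c.map_val_residues hc, c.blocks_sum]⟩
  · rintro ⟨hne, hsum⟩
    have hpos : ∀ {i}, i ∈ b.map ZMod.val → 0 < i := fun hi => by
      obtain ⟨x, hx, rfl⟩ := mem_map.1 hi
      exact ZMod.val_pos.2 (hne x hx)
    let c : Composition n := ⟨b.map ZMod.val, hpos, hsum⟩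
    refine Finset.mem_image.2 ⟨c, Finset.mem_erase.2 ⟨fun h => ?_, Finset.mem_univ _⟩, ?_⟩
    · have hn : n ∈ b.map ZMod.val := by
        rw [show b.map ZMod.val = [n] from congrArg Composition.blocks h]
        exact mem_singleton_self n
      obtain ⟨x, -, hx⟩ := mem_map.1 hn
      exact (hx ▸ x.val_lt).false
    · change (b.map ZMod.val).map _ = b
      rw [map_map]
      exact (map_congr_left fun x _ => ZMod.natCast_zmod_val x).trans (map_id b)

theorem map_intCast_mem_residueLists {ν : List ℤ} (hsum : ν.sum = n) (habs : (ν.map abs).sum = n)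
    (hne : ∀ x ∈ ν, (x : ZMod n) ≠ 0) : ν.map ((↑) : ℤ → ZMod n) ∈ residueLists n := by
  have hpos : ∀ x ∈ ν, 0 < x := fun x hx =>
    ((ν.nonneg_of_sum_eq_sum_map_abs (hsum.trans habs.symm)) x hx).lt_of_ne
      (by rintro rfl; exact hne 0 hx Int.cast_zero)
  obtain ⟨c, hc⟩ := Composition.exists_map_natCast_blocks_eq hpos hsum
  have hres : c.residues = ν.map ((↑) : ℤ → ZMod n) := by
    simp [← hc, Composition.residues, map_map, Function.comp_def]
  have hne' : ∀ y ∈ c.residues, y ≠ 0 := hres ▸ forall_mem_map.2 hne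
  refine Finset.mem_image.2 ⟨c, Finset.mem_erase.2 ⟨?_, Finset.mem_univ _⟩, hres⟩
  rintro rfl
  exact hne' 0 (by simp [Composition.residues]) rfl

end Residues

theorem mem_Bset_of_mem_residueLists {n : ℕ} [NeZero n] {b : List (ZMod n)}
    (hb : b ∈ residueLists n) : b ∈ Bset n := by
  obtain ⟨c, hc, rfl⟩ := Finset.mem_image.1 hb
  have hc := (Finset.mem_erase.1 hc).1
  refine ⟨fun x => c.ne_zero_of_mem_residues hc, c.sum_residues, c.blocks.map fun i : ℕ => -(i : ℤ),
    ?_, forall₂_eq_apply_iff.2 ?_⟩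
  · rw [map_map]
    simp only [Function.comp_def, abs_neg, Nat.abs_cast]
    exact (Nat.cast_list_sum c.blocks).symm.trans (congrArg _ c.blocks_sum)
  · rw [Composition.residues, map_map]
    simp only [Function.comp_def, Int.cast_neg, Int.cast_natCast, neg_neg]

theorem map_neg_mem_Bset {n : ℕ} {b : List (ZMod n)} (hb : b ∈ Bset n) :
    b.map Neg.neg ∈ Bset n := by
  obtain ⟨hne, hsum, ν, habs, hb⟩ := hb
  refine ⟨forall_mem_map.2 fun x hx => neg_ne_zero.2 (hne x hx),
    by rw [← sum_neg, hsum, neg_zero], ν.map Neg.neg,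
    by simpa [map_map, Function.comp_def] using habs, forall₂_eq_apply_iff.2 ?_⟩
  simp [forall₂_eq_apply_iff.1 hb, map_map, Function.comp_def]

theorem Bset_eq {n : ℕ} [NeZero n] (hn : Odd n) :
    Bset n = ↑(residueLists n ∪ (residueLists n).image (map Neg.neg)) := by
  ext b
  simp only [Finset.coe_union, Finset.coe_image, Set.mem_union, Set.mem_image, Finset.mem_coe]
  constructor
  · rintro ⟨hne, hsum, ν, habs, hb⟩
    obtain rfl := forall₂_eq_apply_iff.1 hb
    have hne : ∀ x ∈ ν, (x : ZMod n) ≠ 0 := fun x hx h =>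
      hne _ (mem_map_of_mem hx) (by rw [h, neg_zero])
    have hdvd : (n : ℤ) ∣ ν.sum := by
      rw [← ZMod.intCast_zmod_eq_zero_iff_dvd, Int.cast_list_sum, ← neg_eq_zero]
      rwa [sum_neg, map_map]
    rcases ν.sum_eq_or_eq_neg_of_dvd hn habs hdvd with h | h
    · exact Or.inr ⟨_, map_intCast_mem_residueLists h habs hne,
        by simp [map_map, Function.comp_def]⟩
    · have hν := map_intCast_mem_residueLists (ν := ν.map Neg.neg)
        (by rw [← sum_neg, h, neg_neg]) (by simpa [map_map, Function.comp_def] using habs)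
        (forall_mem_map.2 fun x hx => by simpa using hne x hx)
      exact Or.inl (by simpa [map_map, Function.comp_def] using hν)
  · rintro (hb | ⟨b, hb, rfl⟩)
    · exact mem_Bset_of_mem_residueLists hb
    · exact map_neg_mem_Bset (mem_Bset_of_mem_residueLists hb)

theorem residueLists_inter_image_neg {n : ℕ} [NeZero n] :
    residueLists n ∩ (residueLists n).image (map Neg.neg) =
      (Finset.Ioo 0 n).image fun a : ℕ => [(a : ZMod n), -a] := by
  ext b
  rw [Finset.mem_inter, mem_image_map_neg_iff, mem_residueLists_iff, mem_residueLists_iff,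
    forall_mem_map, Finset.mem_image]
  constructor
  · rintro ⟨⟨hne, hsum⟩, -, hsum'⟩
    have hlen : b.length * n = 2 * n := by
      have : (b.map fun x => x.val + (-x).val).sum = b.length * n := by
        rw [map_congr_left fun x hx => ZMod.val_add_val_neg (hne x hx)]
        simp
      simp only [map_map, Function.comp_def] at hsum'
      rw [← this, sum_map_add, hsum, hsum', two_mul]
    obtain ⟨x, y, rfl⟩ := length_eq_two.1 (Nat.eq_of_mul_eq_mul_right n.pos_of_neZero hlen)
    simp only [map_cons, map_nil, sum_cons, sum_nil, add_zero] at hsum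
    have hy : y = -x := eq_neg_of_add_eq_zero_right <| by
      rw [← ZMod.natCast_zmod_val x, ← ZMod.natCast_zmod_val y, ← Nat.cast_add, hsum,
        ZMod.natCast_self]
    refine ⟨x.val, Finset.mem_Ioo.2 ⟨ZMod.val_pos.2 (hne x mem_cons_self), x.val_lt⟩, ?_⟩
    rw [hy, ZMod.natCast_zmod_val]
  · rintro ⟨a, ha, rfl⟩
    rw [Finset.mem_Ioo] at ha
    have ha0 : (a : ZMod n) ≠ 0 := by
      rw [← ZMod.val_pos, ZMod.val_cast_of_lt ha.2]
      exact ha.1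
    have hval := ZMod.val_add_val_neg ha0
    rw [ZMod.val_cast_of_lt ha.2] at hval
    simp [ha0, Nat.mod_eq_of_lt ha.2, hval, add_comm _ a]

theorem card_image_pair_Ioo {n : ℕ} [NeZero n] :
    ((Finset.Ioo 0 n).image fun a : ℕ => [(a : ZMod n), -a]).card = n - 1 := by
  rw [Finset.card_image_of_injOn, Nat.card_Ioo, Nat.sub_zero]
  intro a ha a' ha' h
  simp only [Finset.coe_Ioo, Set.mem_Ioo, cons.injEq] at ha ha' h
  rw [← ZMod.val_cast_of_lt ha.2, ← ZMod.val_cast_of_lt ha'.2, h.1]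

theorem ncard_Bset {n : ℕ} (hn : Odd n) : (Bset n).ncard + n + 1 = 2 ^ n := by
  have : NeZero n := ⟨hn.pos.ne'⟩
  have h := Finset.card_union_add_card_inter (residueLists n) ((residueLists n).image (map Neg.neg))
  rw [Finset.card_image_of_injective _ (map_injective_iff.2 neg_injective), card_residueLists,
    residueLists_inter_image_neg, card_image_pair_Ioo, ← Set.ncard_coe_finset, ← Bset_eq hn] at h
  have hpow : 2 ^ n = 2 * 2 ^ (n - 1) := by rw [← pow_succ', Nat.sub_add_cancel hn.pos]
  have hone : 1 ≤ 2 ^ (n - 1) := Nat.one_le_two_pow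
  have hpos := hn.pos
  omega

/-- For odd level κ = 2u+1, |B_κ| + 1 = 2^{2u+1} - 2u - 1. -/
theorem card_Bset_odd (u : ℕ) :
    Set.ncard (Bset (2 * u + 1)) + 1 = 2 ^ (2 * u + 1) - 2 * u - 1 := by
  rw [← ncard_Bset (odd_two_mul_add_one u)]
  omega
end

section
/- For odd κ = 2u+1, the set B_κ is in bijection with the quotient of V_κ by entrywise congruence modulo κ, where V_κ is the set of finite sequences of nonzero integers ν with |νᵢ| ≠ κ for all i, Σᵢ|νᵢ| = κ, and Σᵢνᵢ ∈ {0, κ, -κ}; moreover each equivalence class has at most 2 elements, and exactly 2u classes have 2 elements. -/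
/-- V_κ : lists of nonzero integers with |νᵢ| ≠ κ, Σ|νᵢ| = κ, and
Σνᵢ ∈ {0, κ, -κ}. -/
def Vset (κ : ℕ) : Set (List ℤ) :=
  {ν | (∀ x ∈ ν, x ≠ 0) ∧ (∀ x ∈ ν, |x| ≠ (κ : ℤ)) ∧
    (ν.map (fun x => |x|)).sum = (κ : ℤ) ∧
    (ν.sum = 0 ∨ ν.sum = (κ : ℤ) ∨ ν.sum = -(κ : ℤ))}

/-- Entrywise congruence modulo κ (in particular equal lengths). -/
def cong (κ : ℕ) (ν ν' : List ℤ) : Prop :=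
  List.Forall₂ (fun a b => (κ : ℤ) ∣ (a - b)) ν ν'

/-- The congruence relation restricted to V_κ. -/
def congRel (κ : ℕ) (a b : ↥(Vset κ)) : Prop := cong κ a.1 b.1

/-!
Sending `ν` to its residues `-νᵢ mod κ` identifies `V_κ/≡` with `B_κ`: given `Σ|νᵢ| = κ`, the
conditions defining `V_κ` say exactly that these residues are nonzero and sum to zero, because
`|Σνᵢ| ≤ κ`.

Entries of lists in `V_κ` lie in `(-κ, κ) ∖ {0}`, so a congruent `ν' ∈ V_κ` keeps each `νᵢ` or
replaces it by its other representative `νᵢ ∓ κ`, of absolute value `κ - |νᵢ|`. If `k` entries are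
replaced and `U` is the sum of `|νᵢ|` over the others, then `2κ = Σ|νᵢ| + Σ|ν'ᵢ| = kκ + 2U`; as `κ`
is odd, `k = 0` or `k = 2` and `U = 0`, i.e. `ν' = ν` or every entry is replaced. The latter list
has `Σ|ν'ᵢ| = (length - 1) κ`, so it lies in `V_κ` iff `ν` has length two. The classes of size two
are thus represented exactly once by the lists `[a, κ - a]`, `0 < a < κ`.
-/

def otherRep (κ : ℕ) (x : ℤ) : ℤ := x - κ * x.sign

lemma otherRep_of_pos {κ : ℕ} {x : ℤ} (hx : 0 < x) : otherRep κ x = x - κ := by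
  simp [otherRep, Int.sign_eq_one_of_pos hx]

lemma otherRep_of_neg {κ : ℕ} {x : ℤ} (hx : x < 0) : otherRep κ x = x + κ := by
  simp [otherRep, Int.sign_eq_neg_one_of_neg hx]

@[simp]
lemma intCast_otherRep (κ : ℕ) (x : ℤ) : ((otherRep κ x : ℤ) : ZMod κ) = x := by
  simp [otherRep]

lemma abs_otherRep {κ : ℕ} {x : ℤ} (hx0 : x ≠ 0) (hx : |x| ≤ κ) :
    |otherRep κ x| = κ - |x| := by
  rcases hx0.lt_or_gt with hx0 | hx0
  · rw [otherRep_of_neg hx0, abs_of_neg hx0, abs_of_nonneg (by rw [abs_of_neg hx0] at hx; omega)]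
    ring
  · rw [otherRep_of_pos hx0, abs_of_pos hx0, abs_of_nonpos (by rw [abs_of_pos hx0] at hx; omega)]
    ring

lemma eq_or_eq_otherRep_of_dvd_sub {κ : ℕ} {a b : ℤ} (ha : |a| < κ) (hb : |b| < κ)
    (hab : (κ : ℤ) ∣ a - b) : b = a ∨ (b = otherRep κ a ∧ |a| + |b| = κ) := by
  obtain ⟨t, ht⟩ := hab
  have hκ : (0 : ℤ) < κ := (abs_nonneg a).trans_lt ha
  have ht' : |t| < 2 := by
    have : (κ : ℤ) * |t| < κ * 2 := by
      rw [← abs_of_pos hκ, ← abs_mul, ← ht, abs_of_pos hκ]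
      linarith [abs_sub a b]
    exact lt_of_mul_lt_mul_left this hκ.le
  rw [abs_lt] at ha hb ht'
  obtain ⟨ht₁, ht₂⟩ := ht'
  interval_cases t
  · have ha0 : a < 0 := by omega
    rw [otherRep_of_neg ha0, abs_of_neg ha0, abs_of_pos (show 0 < b by omega)]
    omega
  · omega
  · have ha0 : 0 < a := by omega
    rw [otherRep_of_pos ha0, abs_of_pos ha0, abs_of_neg (show b < 0 by omega)]
    omega

lemma abs_le_sum_map_abs {ν : List ℤ} {x : ℤ} (hx : x ∈ ν) :
    |x| ≤ (ν.map (fun y => |y|)).sum :=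
  List.single_le_sum (by simp) _ (List.mem_map_of_mem hx)

lemma abs_sum_le_sum_map_abs (ν : List ℤ) : |ν.sum| ≤ (ν.map (fun y => |y|)).sum := by
  induction ν with
  | nil => simp
  | cons x ν ih => simpa using (abs_add_le x ν.sum).trans (by omega)

lemma eq_zero_or_eq_or_eq_neg_of_dvd_of_abs_le {κ s : ℤ} (hs : κ ∣ s) (hsκ : |s| ≤ κ) :
    s = 0 ∨ s = κ ∨ s = -κ := by
  rcases hsκ.lt_or_eq with hlt | heq
  · exact Or.inl (Int.eq_zero_of_abs_lt_dvd hs hlt)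
  · exact Or.inr ((abs_eq ((abs_nonneg s).trans hsκ)).mp heq)

def negResidues (κ : ℕ) (ν : List ℤ) : List (ZMod κ) := ν.map (fun x : ℤ => -(x : ZMod κ))

lemma cong_iff_negResidues_eq {κ : ℕ} {ν ν' : List ℤ} :
    cong κ ν ν' ↔ negResidues κ ν = negResidues κ ν' := by
  have hrel : (fun a b : ℤ => (κ : ℤ) ∣ a - b) = fun a b : ℤ => -(a : ZMod κ) = -(b : ZMod κ) := by
    ext a b
    rw [neg_inj, ZMod.intCast_eq_intCast_iff_dvd_sub, dvd_sub_comm]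
  rw [cong, hrel, negResidues, negResidues, ← List.forall₂_eq_eq_eq, List.forall₂_map_left_iff,
    List.forall₂_map_right_iff]

lemma forall_mem_negResidues_ne_zero_iff {κ : ℕ} {ν : List ℤ} :
    (∀ r ∈ negResidues κ ν, r ≠ 0) ↔ ∀ x ∈ ν, ¬ (κ : ℤ) ∣ x := by
  simp [negResidues, ZMod.intCast_zmod_eq_zero_iff_dvd]

lemma sum_negResidues (κ : ℕ) (ν : List ℤ) : (negResidues κ ν).sum = -(ν.sum : ZMod κ) := by
  induction ν with
  | nil => simp [negResidues]
  | cons x ν ih =>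
    simp only [negResidues, List.map_cons, List.sum_cons] at ih ⊢
    rw [ih, Int.cast_add, neg_add]

lemma sum_negResidues_eq_zero_iff {κ : ℕ} {ν : List ℤ} :
    (negResidues κ ν).sum = 0 ↔ (κ : ℤ) ∣ ν.sum := by
  rw [sum_negResidues, neg_eq_zero, ZMod.intCast_zmod_eq_zero_iff_dvd]

lemma mem_Vset_iff {κ : ℕ} {ν : List ℤ} :
    ν ∈ Vset κ ↔ (ν.map (fun x => |x|)).sum = κ ∧ (∀ r ∈ negResidues κ ν, r ≠ 0) ∧
      (negResidues κ ν).sum = 0 := by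
  rw [forall_mem_negResidues_ne_zero_iff, sum_negResidues_eq_zero_iff]
  constructor
  · rintro ⟨hne, habs, hsum, hsum'⟩
    refine ⟨hsum, fun x hx hdvd => ?_, ?_⟩
    · have hxκ : |x| < κ := (hsum ▸ abs_le_sum_map_abs hx).lt_of_ne (habs x hx)
      exact hne x hx (Int.eq_zero_of_abs_lt_dvd hdvd hxκ)
    · rcases hsum' with h | h | h <;> simp [h]
  · rintro ⟨hsum, hndvd, hdvd⟩
    refine ⟨fun x hx h0 => hndvd x hx (h0 ▸ dvd_zero _), fun x hx hxκ => hndvd x hx ?_, hsum,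
      eq_zero_or_eq_or_eq_neg_of_dvd_of_abs_le hdvd (hsum ▸ abs_sum_le_sum_map_abs ν)⟩
    rcases (abs_eq (by positivity)).mp hxκ with h | h <;> simp [h]

lemma Bset_eq_image (κ : ℕ) : Bset κ = negResidues κ '' Vset κ := by
  ext b
  have hwit (ν : List ℤ) : List.Forall₂ (fun (bi : ZMod κ) (νi : ℤ) => bi = -(νi : ZMod κ)) b ν ↔
      b = negResidues κ ν := by
    rw [negResidues, ← List.forall₂_map_right_iff (R := Eq), List.forall₂_eq_eq_eq]
  simp only [Set.mem_image, mem_Vset_iff]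
  constructor
  · rintro ⟨hne, hsum, ν, hνabs, hb⟩
    obtain rfl := (hwit ν).1 hb
    exact ⟨ν, ⟨hνabs, hne, hsum⟩, rfl⟩
  · rintro ⟨ν, ⟨hνabs, hne, hsum⟩, rfl⟩
    exact ⟨hne, hsum, ν, hνabs, (hwit ν).2 rfl⟩

lemma abs_lt_of_mem_Vset {κ : ℕ} {ν : List ℤ} (hν : ν ∈ Vset κ) {x : ℤ} (hx : x ∈ ν) :
    |x| < κ :=
  (hν.2.2.1 ▸ abs_le_sum_map_abs hx).lt_of_ne (hν.2.1 x hx)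

/-- `k` counts the entries where `ν'` takes the other representative, `U` is the sum of `|νᵢ|`
over the remaining entries. -/
lemma exists_flips_of_cong {κ : ℕ} {ν ν' : List ℤ} (h : cong κ ν ν')
    (hν : ∀ x ∈ ν, x ≠ 0 ∧ |x| < κ) (hν' : ∀ y ∈ ν', |y| < κ) :
    ∃ (k : ℕ) (U : ℤ), 0 ≤ U ∧
      (ν.map (fun x => |x|)).sum + (ν'.map (fun x => |x|)).sum = k * κ + 2 * U ∧
      (k = 0 → ν' = ν) ∧ (U = 0 → ν' = ν.map (otherRep κ)) := by
  induction h with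
  | nil => exact ⟨0, 0, le_rfl, by simp, fun _ => rfl, fun _ => rfl⟩
  | @cons a b l l' hab _ ih =>
    obtain ⟨ha0, ha⟩ := hν a List.mem_cons_self
    obtain ⟨k, U, hU, hsum, hk, hU0⟩ :=
      ih (fun x hx => hν x (List.mem_cons_of_mem a hx))
        (fun y hy => hν' y (List.mem_cons_of_mem b hy))
    rcases eq_or_eq_otherRep_of_dvd_sub ha (hν' b List.mem_cons_self) hab with hba | ⟨hba, hκ⟩
    · refine ⟨k, U + |a|, by positivity, ?_, fun h0 => by rw [hba, hk h0], fun h0 => ?_⟩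
      · simp only [List.map_cons, List.sum_cons, hba]
        linarith
      · have : 0 < |a| := abs_pos.mpr ha0
        omega
    · refine ⟨k + 1, U, hU, ?_, fun h0 => absurd h0 k.succ_ne_zero,
        fun h0 => by rw [hU0 h0, hba]; rfl⟩
      simp only [List.map_cons, List.sum_cons]
      push_cast
      linarith

lemma eq_or_eq_map_otherRep_of_cong {κ : ℕ} (hκ : Odd κ) {ν ν' : List ℤ} (hν : ν ∈ Vset κ)
    (hν' : ν' ∈ Vset κ) (h : cong κ ν ν') : ν' = ν ∨ ν' = ν.map (otherRep κ) := by
  obtain ⟨k, U, hU, hsum, hk, hU0⟩ := exists_flips_of_cong h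
    (fun x hx => ⟨hν.1 x hx, abs_lt_of_mem_Vset hν hx⟩) (fun y hy => abs_lt_of_mem_Vset hν' hy)
  rw [hν.2.2.1, hν'.2.2.1] at hsum
  have hκ0 : (0 : ℤ) < κ := by exact_mod_cast hκ.pos
  have hk2 : k ≤ 2 := by
    have : (k : ℤ) * κ ≤ 2 * κ := by linarith
    exact_mod_cast le_of_mul_le_mul_right this hκ0
  interval_cases k
  · exact Or.inl (hk rfl)
  · obtain ⟨m, hm⟩ := hκ
    omega
  · exact Or.inr (hU0 (by push_cast at hsum; linarith))

lemma cong_map_otherRep (κ : ℕ) (ν : List ℤ) : cong κ ν (ν.map (otherRep κ)) := by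
  simp [cong_iff_negResidues_eq, negResidues]

lemma mem_Vset_iff_of_cong {κ : ℕ} {ν ν' : List ℤ} (hν : ν ∈ Vset κ) (h : cong κ ν ν') :
    ν' ∈ Vset κ ↔ (ν'.map (fun x => |x|)).sum = κ := by
  rw [mem_Vset_iff] at hν ⊢
  rw [← cong_iff_negResidues_eq.mp h]
  exact ⟨fun h => h.1, fun h => ⟨h, hν.2⟩⟩

lemma sum_map_sub_abs (c : ℤ) (ν : List ℤ) :
    (ν.map (fun x => c - |x|)).sum = ν.length * c - (ν.map (fun x => |x|)).sum := by
  induction ν with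
  | nil => simp
  | cons x ν ih =>
    simp only [List.map_cons, List.sum_cons, List.length_cons, ih]
    push_cast
    ring

lemma sum_map_abs_map_otherRep {κ : ℕ} {ν : List ℤ} (hν : ν ∈ Vset κ) :
    ((ν.map (otherRep κ)).map (fun x => |x|)).sum = ν.length * κ - κ := by
  have hterm : ∀ x ∈ ν, |otherRep κ x| = κ - |x| := fun x hx =>
    abs_otherRep (hν.1 x hx) (abs_lt_of_mem_Vset hν hx).le
  rw [List.map_map, List.map_congr_left (f := (fun x => |x|) ∘ otherRep κ) hterm,
    sum_map_sub_abs, hν.2.2.1]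

lemma map_otherRep_mem_Vset_iff {κ : ℕ} (hκ : 0 < κ) {ν : List ℤ} (hν : ν ∈ Vset κ) :
    ν.map (otherRep κ) ∈ Vset κ ↔ ν.length = 2 := by
  rw [mem_Vset_iff_of_cong hν (cong_map_otherRep κ ν), sum_map_abs_map_otherRep hν]
  have hκ0 : (κ : ℤ) ≠ 0 := by exact_mod_cast hκ.ne'
  constructor
  · intro h
    have : ((ν.length : ℤ) - 2) * κ = 0 := by linarith
    exact_mod_cast sub_eq_zero.mp ((mul_eq_zero.mp this).resolve_right hκ0)
  · intro h
    rw [h]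
    ring

lemma map_otherRep_ne_self {κ : ℕ} (hκ : 0 < κ) {ν : List ℤ} (hν : ν ∈ Vset κ) :
    ν.map (otherRep κ) ≠ ν := by
  cases ν with
  | nil =>
    have h0 := hν.2.2.1
    simp only [List.map_nil, List.sum_nil] at h0
    omega
  | cons x ν =>
    have hx : x ≠ 0 := hν.1 x List.mem_cons_self
    simp [otherRep, hx, hκ.ne']

lemma cong_refl (κ : ℕ) (ν : List ℤ) : cong κ ν ν := cong_iff_negResidues_eq.mpr rfl

def congClass (κ : ℕ) (ν : List ℤ) : Set (List ℤ) := {ν' | ν' ∈ Vset κ ∧ cong κ ν ν'}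

lemma congClass_eq_pair {κ : ℕ} (hκ : Odd κ) {ν : List ℤ} (hν : ν ∈ Vset κ)
    (hl : ν.length = 2) : congClass κ ν = {ν, ν.map (otherRep κ)} := by
  ext ν'
  constructor
  · exact fun ⟨hν', h⟩ => eq_or_eq_map_otherRep_of_cong hκ hν hν' h
  · rintro (rfl | rfl)
    · exact ⟨hν, cong_refl κ ν'⟩
    · exact ⟨(map_otherRep_mem_Vset_iff hκ.pos hν).mpr hl, cong_map_otherRep κ ν⟩

lemma congClass_eq_singleton {κ : ℕ} (hκ : Odd κ) {ν : List ℤ} (hν : ν ∈ Vset κ)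
    (hl : ν.length ≠ 2) : congClass κ ν = {ν} := by
  ext ν'
  constructor
  · rintro ⟨hν', h⟩
    refine (eq_or_eq_map_otherRep_of_cong hκ hν hν' h).resolve_right ?_
    rintro rfl
    exact hl ((map_otherRep_mem_Vset_iff hκ.pos hν).mp hν')
  · rintro rfl
    exact ⟨hν, cong_refl κ ν'⟩

lemma ncard_congClass_le_two {κ : ℕ} (hκ : Odd κ) {ν : List ℤ} (hν : ν ∈ Vset κ) :
    (congClass κ ν).ncard ≤ 2 := by
  by_cases hl : ν.length = 2
  · rw [congClass_eq_pair hκ hν hl]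
    exact (Set.ncard_insert_le _ _).trans (by simp)
  · simp [congClass_eq_singleton hκ hν hl]

lemma ncard_congClass_eq_two_iff {κ : ℕ} (hκ : Odd κ) {ν : List ℤ} (hν : ν ∈ Vset κ) :
    (congClass κ ν).ncard = 2 ↔ ν.length = 2 := by
  by_cases hl : ν.length = 2
  · simp only [hl, iff_true, congClass_eq_pair hκ hν hl]
    exact Set.ncard_pair (map_otherRep_ne_self hκ.pos hν).symm
  · simp [hl, congClass_eq_singleton hκ hν hl]

lemma congRel_equivalence (κ : ℕ) : Equivalence (congRel κ) where
  refl x := cong_refl κ x.1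
  symm h := cong_iff_negResidues_eq.mpr (cong_iff_negResidues_eq.mp h).symm
  trans h h' := cong_iff_negResidues_eq.mpr
    ((cong_iff_negResidues_eq.mp h).trans (cong_iff_negResidues_eq.mp h'))

lemma mk_eq_mk_iff {κ : ℕ} {x y : Vset κ} :
    Quot.mk (congRel κ) x = Quot.mk (congRel κ) y ↔ cong κ x.1 y.1 :=
  Quot.eq.trans (congRel_equivalence κ).eqvGen_iff

lemma ncard_fiber_mk {κ : ℕ} (y : Vset κ) :
    {x : Vset κ | Quot.mk (congRel κ) x = Quot.mk (congRel κ) y}.ncard =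
      (congClass κ y.1).ncard := by
  have hfiber : {x : Vset κ | Quot.mk (congRel κ) x = Quot.mk (congRel κ) y} =
      Subtype.val ⁻¹' congClass κ y.1 := by
    ext x
    rw [Set.mem_ofPred_eq, mk_eq_mk_iff, Set.mem_preimage, congClass, Set.mem_ofPred_eq]
    exact ⟨fun h => ⟨x.2, (congRel_equivalence κ).symm h⟩,
      fun h => (congRel_equivalence κ).symm h.2⟩
  rw [hfiber, Set.ncard_preimage_of_injective_subset_range Subtype.val_injective]
  exact fun ν hν => ⟨⟨ν, hν.1⟩, rfl⟩

lemma nonempty_equiv_Bset_quot (κ : ℕ) : Nonempty (Bset κ ≃ Quot (congRel κ)) := by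
  let f : Vset κ → Bset κ := fun x => ⟨negResidues κ x.1, Bset_eq_image κ ▸ ⟨x.1, x.2, rfl⟩⟩
  have hf : Function.Surjective f := by
    rintro ⟨b, hb⟩
    obtain ⟨ν, hν, rfl⟩ := Bset_eq_image κ ▸ hb
    exact ⟨⟨ν, hν⟩, rfl⟩
  refine ⟨((Setoid.quotientKerEquivOfSurjective f hf).symm.trans (Quot.congrRight ?_))⟩
  intro x y
  exact Subtype.ext_iff.trans cong_iff_negResidues_eq.symm

lemma pair_mem_Vset {κ : ℕ} {a : ℤ} (ha : 0 < a) (haκ : a < κ) : [a, κ - a] ∈ Vset κ := by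
  refine ⟨?_, ?_, ?_, Or.inr (Or.inl (by simp))⟩ <;>
    simp [abs_of_pos ha, abs_of_pos (sub_pos.mpr haκ)] <;> omega

lemma exists_pair_cong {κ : ℕ} {ν : List ℤ} (hν : ν ∈ Vset κ) (hl : ν.length = 2) :
    ∃ a : ℤ, 0 < a ∧ a < κ ∧ cong κ [a, κ - a] ν := by
  obtain ⟨x, y, rfl⟩ : ∃ x y, ν = [x, y] := by
    match ν, hl with | [x, y], _ => exact ⟨x, y, rfl⟩
  obtain ⟨-, hndvd, hsum⟩ := mem_Vset_iff.mp hν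
  rw [forall_mem_negResidues_ne_zero_iff] at hndvd
  rw [sum_negResidues_eq_zero_iff] at hsum
  have hx : ¬ (κ : ℤ) ∣ x := hndvd x List.mem_cons_self
  have hκ : (0 : ℤ) < κ := (abs_nonneg x).trans_lt (abs_lt_of_mem_Vset hν List.mem_cons_self)
  obtain ⟨m, hm⟩ := hsum
  refine ⟨x % κ, (Int.emod_pos_of_not_dvd hx).resolve_left hκ.ne', Int.emod_lt_of_pos x hκ,
    .cons ⟨-(x / κ), ?_⟩ (.cons ⟨1 - m + x / κ, ?_⟩ .nil)⟩
  · rw [Int.emod_def]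
    ring
  · simp only [List.sum_cons, List.sum_nil, add_zero] at hm
    rw [Int.emod_def]
    linear_combination -hm

def pairClass (κ : ℕ) (a : Set.Ioo (0 : ℤ) κ) : Quot (congRel κ) :=
  Quot.mk _ ⟨[a, κ - a], pair_mem_Vset a.2.1 a.2.2⟩

lemma pairClass_injective (κ : ℕ) : Function.Injective (pairClass κ) := by
  rintro ⟨a, ha, haκ⟩ ⟨b, hb, hbκ⟩ h
  have hdvd : (κ : ℤ) ∣ a - b := (List.forall₂_cons.mp (mk_eq_mk_iff.mp h)).1
  have : a - b = 0 := Int.eq_zero_of_abs_lt_dvd hdvd (abs_sub_lt_iff.mpr ⟨by omega, by omega⟩)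
  exact Subtype.ext (sub_eq_zero.mp this)

lemma range_pairClass {κ : ℕ} (hκ : Odd κ) :
    Set.range (pairClass κ) =
      {c | {x : Vset κ | Quot.mk (congRel κ) x = c}.ncard = 2} := by
  ext c
  obtain ⟨y, rfl⟩ := Quot.exists_rep c
  rw [Set.mem_ofPred_eq, ncard_fiber_mk, ncard_congClass_eq_two_iff hκ y.2]
  constructor
  · rintro ⟨a, ha⟩
    rw [← (mk_eq_mk_iff.mp ha).length_eq]
    rfl
  · intro hl
    obtain ⟨a, ha, haκ, h⟩ := exists_pair_cong y.2 hl
    exact ⟨⟨a, ha, haκ⟩, mk_eq_mk_iff.mpr h⟩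

/-- For odd κ = 2u+1, B_κ is in bijection with the quotient V_κ/≡ of V_κ by
entrywise congruence modulo κ; each congruence class (within V_κ) has at most
two elements, and exactly 2u classes have two elements. -/
theorem Bset_bij_quotient_odd (u : ℕ) :
    Nonempty (↥(Bset (2 * u + 1)) ≃ Quot (congRel (2 * u + 1))) ∧
    (∀ ν ∈ Vset (2 * u + 1),
      Set.ncard {ν' | ν' ∈ Vset (2 * u + 1) ∧ cong (2 * u + 1) ν ν'} ≤ 2) ∧
    Set.ncard {c : Quot (congRel (2 * u + 1)) |
        Set.ncard {x : ↥(Vset (2 * u + 1)) | Quot.mk (congRel (2 * u + 1)) x = c} = 2}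
      = 2 * u := by
  have hκ : Odd (2 * u + 1) := odd_two_mul_add_one u
  refine ⟨nonempty_equiv_Bset_quot _, fun ν hν => ncard_congClass_le_two hκ hν, ?_⟩
  rw [← range_pairClass hκ, Set.ncard_range_of_injective (pairClass_injective _),
    Nat.card_eq_fintype_card]
  simp only [Fintype.card_ofFinset, Int.card_Ioo]
  omega
end
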